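/- arXiv:2006.09200 — 7 statements merged into one kernel-verified Lean document; each statement's English description precedes it below -/
import Mathlib

section
/- Let n ≥ 1, T > 0, let S₀ ⊆ ℝⁿ be bounded and nonempty, let 0 < α ≤ 1 and K > 0, and let Z : [0,T]×S₀ → ℝⁿ satisfy |Z(t₁,x) − Z(t₂,x)| ≤ K|t₁−t₂|^α for all t₁,t₂ ∈ [0,T] and all x ∈ S₀. Set S = {(t,Z(t,x)) : t ∈ [0,T], x ∈ S₀} ⊆ [0,T]×ℝⁿ and S(t) = {Z(t,x) : x ∈ S₀}. Suppose D ∈ [0,n) is such that the temporal sections satisfy the uniform Minkowski bound: for every δ > 0 there exists C > 0 with μₙ({x ∈ ℝⁿ : d_{S(t)}(x) < ε}) ≤ C ε^{n−D−δ} for all t ∈ [0,T] and all ε ∈ (0,1] (i.e. sup_{t∈[0,T]} dim_B S(t) ≤ D uniformly). Then for every r with 0 < r < α(n−D) and every compact K' ⊆ ℝⁿ there exists M > 0 such that ∫_{K'} d_S(t,x)^{−r} dx ≤ M for every t ∈ [0,T]; in particular d_S^{−1} ∈ L^∞(0,T;L^r_loc(ℝⁿ)). -/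
open MeasureTheory Set Filter ENNReal

noncomputable section

abbrev En (n : ℕ) : Type := EuclideanSpace ℝ (Fin n)

/-- Euclidean distance in ℝ^{1+n} from (t,x) to S. -/
noncomputable def dS {n : ℕ} (S : Set (ℝ × En n)) (t : ℝ) (x : En n) : ℝ :=
  ⨅ p : S, Real.sqrt ((t - (p : ℝ × En n).1) ^ 2 + dist x (p : ℝ × En n).2 ^ 2)

/-- component of `b` along the spatial gradient of `dS`. -/
noncomputable def bDotGradDS {n : ℕ} (b : ℝ → En n → En n) (S : Set (ℝ × En n))
    (t : ℝ) (x : En n) : ℝ :=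
  fderiv ℝ (fun y => dS S t y) x (b t x)

noncomputable def dSInv {n : ℕ} (S : Set (ℝ × En n)) (t : ℝ) (x : En n) : ℝ≥0∞ :=
  (ENNReal.ofReal (dS S t x))⁻¹

noncomputable def eNorm {α : Type*} [MeasurableSpace α] (f : α → ℝ≥0∞) (q : ℝ≥0∞)
    (μ : Measure α) : ℝ≥0∞ :=
  if q = ∞ then essSup f μ else (∫⁻ a, f a ^ q.toReal ∂μ) ^ (1 / q.toReal)

def MemLpLqLoc {n : ℕ} {F : Type*} [NormedAddCommGroup F] (T : ℝ) (p q : ℝ≥0∞)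
    (f : ℝ → En n → F) : Prop :=
  ∀ K : Set (En n), IsCompact K →
    (∀ᵐ t ∂(volume.restrict (Ioo (0:ℝ) T)), AEStronglyMeasurable (f t) (volume.restrict K)) ∧
    MemLp (fun t => (eLpNorm (f t) q (volume.restrict K)).toReal) p (volume.restrict (Ioo (0:ℝ) T))

def MemLpLqLocInv {n : ℕ} (T : ℝ) (p q : ℝ≥0∞) (f : ℝ → En n → ℝ≥0∞) : Prop :=
  ∀ K : Set (En n), IsCompact K →
    eNorm (fun t => eNorm (f t) q (volume.restrict K)) p (volume.restrict (Ioo (0:ℝ) T)) < ∞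

noncomputable def transportOp {n : ℕ} (b : ℝ → En n → En n) (divb : ℝ → En n → ℝ)
    (φ : ℝ × En n → ℝ) (p : ℝ × En n) : ℝ :=
  deriv (fun s => φ (s, p.2)) p.1 + fderiv ℝ (fun y => φ (p.1, y)) p.2 (b p.1 p.2)
    + divb p.1 p.2 * φ p

def LinfLocOn {n : ℕ} (Ω : Set (ℝ × En n)) (u : ℝ → En n → ℝ) : Prop :=
  AEStronglyMeasurable (fun p : ℝ × En n => u p.1 p.2) (volume.restrict Ω) ∧
  ∀ K : Set (ℝ × En n), IsCompact K → K ⊆ Ω →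
    ∃ C : ℝ, ∀ᵐ p ∂(volume.restrict K), |u p.1 p.2| ≤ C

def IsWeakSolution {n : ℕ} (T : ℝ) (b : ℝ → En n → En n) (divb : ℝ → En n → ℝ)
    (u₀ : En n → ℝ) (u : ℝ → En n → ℝ) : Prop :=
  LinfLocOn (Ioo 0 T ×ˢ univ) u ∧
  ∀ φ : ℝ × En n → ℝ, ContDiff ℝ (⊤ : ℕ∞) φ → HasCompactSupport φ →
    tsupport φ ⊆ Iio T ×ˢ univ →
    (∫ x, u₀ x * φ (0, x)) +
      ∫ p in Ioo (0:ℝ) T ×ˢ (univ : Set (En n)), u p.1 p.2 * transportOp b divb φ p = 0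

def HasDistribDiv {n : ℕ} (T : ℝ) (b : ℝ → En n → En n) (divb : ℝ → En n → ℝ) : Prop :=
  ∀ φ : ℝ × En n → ℝ, ContDiff ℝ (⊤ : ℕ∞) φ → HasCompactSupport φ →
    tsupport φ ⊆ Ioo 0 T ×ˢ univ →
    ∫ p in Ioo (0:ℝ) T ×ˢ (univ : Set (En n)),
        (fderiv ℝ (fun y => φ (p.1, y)) p.2) (b p.1 p.2)
      = - ∫ p in Ioo (0:ℝ) T ×ˢ (univ : Set (En n)), divb p.1 p.2 * φ p

def MemL1Linf {n : ℕ} {F : Type*} [NormedAddCommGroup F] (T : ℝ) (f : ℝ → En n → F) : Prop :=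
  MemLp (fun t => (eLpNorm (f t) ∞ (volume : Measure (En n))).toReal) 1
    (volume.restrict (Ioo (0:ℝ) T))

def L1LocOn {n : ℕ} {F : Type*} [NormedAddCommGroup F] (Ω : Set (ℝ × En n))
    (f : ℝ → En n → F) : Prop :=
  ∀ K : Set (ℝ × En n), IsCompact K → K ⊆ Ω →
    IntegrableOn (fun p : ℝ × En n => f p.1 p.2) K

def extZero {n : ℕ} {F : Type*} [Zero F] (f : ℝ → En n → F) : ℝ → En n → F :=
  fun t x => if t < 0 then 0 else f t x

def IsRegularLagrangianFlow {n : ℕ} (T : ℝ) (b : ℝ → En n → En n)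
    (X : ℝ → En n → En n) : Prop :=
  (∀ᵐ x : En n, IntegrableOn (fun τ => b τ (X τ x)) (Icc 0 T) ∧
    ∀ t ∈ Icc (0:ℝ) T, X t x = x + ∫ τ in Icc (0:ℝ) t, b τ (X τ x)) ∧
  ∃ L : ℝ, 0 < L ∧ ∀ B : Set (En n), MeasurableSet B → ∀ t ∈ Icc (0:ℝ) T,
    volume (X t ⁻¹' B) ≤ ENNReal.ofReal L * volume B

end

open ENNReal in
private lemma dyadic_pointwise_bound {g : ℝ} (hg : 0 ≤ g) {q : ℝ} (hq : 0 < q) :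
    ((ENNReal.ofReal g)⁻¹) ^ q ≤
      1 + ∑' k : ℕ, (if g ≤ (2:ℝ) ^ (-(k:ℝ)) then (2:ℝ≥0∞) ^ (q * ((k:ℝ) + 1)) else 0) := by
  classical
  rcases hg.eq_or_lt with hg0 | hg0
  · -- g = 0 : right side is infinite
    have hsum : (∑' k : ℕ, (if g ≤ (2:ℝ) ^ (-(k:ℝ)) then (2:ℝ≥0∞) ^ (q * ((k:ℝ) + 1)) else 0))
        = ∞ := by
      have h1 : ∀ k : ℕ, (1:ℝ≥0∞)
          ≤ (if g ≤ (2:ℝ) ^ (-(k:ℝ)) then (2:ℝ≥0∞) ^ (q * ((k:ℝ) + 1)) else 0) := by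
        intro k
        rw [if_pos (by rw [← hg0]; positivity)]
        calc (1:ℝ≥0∞) = (2:ℝ≥0∞) ^ (0:ℝ) := ENNReal.rpow_zero.symm
          _ ≤ _ := ENNReal.rpow_le_rpow_of_exponent_le (by norm_num) (by positivity)
      refine top_le_iff.mp ?_
      calc (⊤:ℝ≥0∞) = ∑' _ : ℕ, (1:ℝ≥0∞) :=
            (ENNReal.tsum_const_eq_top_of_ne_zero one_ne_zero).symm
        _ ≤ _ := ENNReal.tsum_le_tsum h1
    rw [hsum]
    simp
  · by_cases hg1 : 1 < g
    · have h1 : (ENNReal.ofReal g)⁻¹ ≤ 1 := by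
        rw [ENNReal.inv_le_one]
        exact ENNReal.one_le_ofReal.mpr hg1.le
      calc ((ENNReal.ofReal g)⁻¹) ^ q ≤ (1:ℝ≥0∞) ^ q := ENNReal.rpow_le_rpow h1 hq.le
        _ = 1 := ENNReal.one_rpow q
        _ ≤ _ := le_self_add
    · push_neg at hg1
      have hex : ∃ k : ℕ, (2:ℝ) ^ (-(k:ℝ) - 1) < g := by
        obtain ⟨m, hm⟩ := exists_pow_lt_of_lt_one hg0 (by norm_num : (1/2:ℝ) < 1)
        refine ⟨m, lt_of_le_of_lt ?_ hm⟩
        have he : ((1:ℝ)/2) ^ m = (2:ℝ) ^ (-(m:ℝ)) := by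
          rw [Real.rpow_neg (by norm_num), Real.rpow_natCast]
          simp [one_div, inv_pow]
        rw [he]
        exact Real.rpow_le_rpow_of_exponent_le (by norm_num) (by linarith)
      set k₀ := Nat.find hex with hk₀
      have h1 : (2:ℝ) ^ (-(k₀:ℝ) - 1) < g := Nat.find_spec hex
      have h2 : g ≤ (2:ℝ) ^ (-(k₀:ℝ)) := by
        rcases Nat.eq_zero_or_pos k₀ with h | h
        · rw [h]
          simpa using hg1
        · have hmin := Nat.find_min hex (Nat.sub_lt h one_pos)
          push_neg at hmin
          have hc : (((k₀ - 1 : ℕ)):ℝ) = (k₀:ℝ) - 1 := by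
            push_cast [Nat.cast_sub h]
            ring
        -- hmin : g ≤ 2 ^ (-(k₀-1) - 1)
          calc g ≤ (2:ℝ) ^ (-((k₀ - 1 : ℕ):ℝ) - 1) := hmin
            _ = (2:ℝ) ^ (-(k₀:ℝ)) := by rw [hc]; ring_nf
      have hL : ((ENNReal.ofReal g)⁻¹) ^ q ≤ (2:ℝ≥0∞) ^ (q * ((k₀:ℝ) + 1)) := by
        have hb : (2:ℝ≥0∞) ^ (-(k₀:ℝ) - 1) ≤ ENNReal.ofReal g := by
          calc (2:ℝ≥0∞) ^ (-(k₀:ℝ) - 1) = ENNReal.ofReal ((2:ℝ) ^ (-(k₀:ℝ) - 1)) := by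
                rw [← ENNReal.ofReal_rpow_of_pos (by norm_num)]
                norm_num
            _ ≤ ENNReal.ofReal g := ENNReal.ofReal_le_ofReal h1.le
        have hbi : (ENNReal.ofReal g)⁻¹ ≤ (2:ℝ≥0∞) ^ ((k₀:ℝ) + 1) := by
          calc (ENNReal.ofReal g)⁻¹ ≤ ((2:ℝ≥0∞) ^ (-(k₀:ℝ) - 1))⁻¹ := ENNReal.inv_le_inv' hb
            _ = (2:ℝ≥0∞) ^ ((k₀:ℝ) + 1) := by
                rw [← ENNReal.rpow_neg]
                ring_nf
        calc ((ENNReal.ofReal g)⁻¹) ^ q ≤ ((2:ℝ≥0∞) ^ ((k₀:ℝ) + 1)) ^ q :=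
              ENNReal.rpow_le_rpow hbi hq.le
          _ = (2:ℝ≥0∞) ^ (q * ((k₀:ℝ) + 1)) := by
              rw [← ENNReal.rpow_mul, mul_comm]
      refine hL.trans ?_
      calc (2:ℝ≥0∞) ^ (q * ((k₀:ℝ) + 1))
          = (if g ≤ (2:ℝ) ^ (-(k₀:ℝ)) then (2:ℝ≥0∞) ^ (q * ((k₀:ℝ) + 1)) else 0) :=
            (if_pos h2).symm
        _ ≤ ∑' k : ℕ, (if g ≤ (2:ℝ) ^ (-(k:ℝ)) then (2:ℝ≥0∞) ^ (q * ((k:ℝ) + 1)) else 0) :=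
            ENNReal.le_tsum k₀
        _ ≤ _ := le_add_self

open MeasureTheory Set Filter ENNReal in
/-- for a singular set swept out by trajectories that are uniformly α-Hölder in
time, with temporal sections of box-counting dimension uniformly at most `D`, one has
`d_S⁻¹ ∈ L^∞(0,T;L^r_loc)` for every `r < α(n−D)`. -/
theorem codimension_print_of_holder_trajectories
    {n : ℕ} (hn : 1 ≤ n) (T : ℝ) (hT : 0 < T)
    (S₀ : Set (En n)) (hS₀b : Bornology.IsBounded S₀) (hS₀ne : S₀.Nonempty)
    (α : ℝ) (hα0 : 0 < α) (hα1 : α ≤ 1) (K : ℝ) (hK : 0 < K)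
    (Z : ℝ → En n → En n)
    (hZ : ∀ t₁ ∈ Icc (0:ℝ) T, ∀ t₂ ∈ Icc (0:ℝ) T, ∀ x ∈ S₀,
      dist (Z t₁ x) (Z t₂ x) ≤ K * |t₁ - t₂| ^ α)
    (S : Set (ℝ × En n)) (hS : S = {z : ℝ × En n | ∃ t ∈ Icc (0:ℝ) T, ∃ x ∈ S₀, z = (t, Z t x)})
    (D : ℝ) (hD0 : 0 ≤ D) (hDn : D < n)
    -- uniform Minkowski bound on the temporal sections S(t) = Z t '' S₀
    (hsec : ∀ δ > (0:ℝ), ∃ C > (0:ℝ), ∀ t ∈ Icc (0:ℝ) T, ∀ ε ∈ Ioc (0:ℝ) 1,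
      volume {x : En n | Metric.infDist x (Z t '' S₀) < ε}
        ≤ ENNReal.ofReal (C * ε ^ ((n : ℝ) - D - δ))) :
    ∀ r : ℝ, 0 < r → r < α * ((n : ℝ) - D) →
      ∀ K' : Set (En n), IsCompact K' →
        ∃ M > (0:ℝ), ∀ t ∈ Icc (0:ℝ) T,
          ∫⁻ x in K', (dSInv S t x) ^ r ≤ ENNReal.ofReal M := by
  intro r hr0 hrb K' hK'
  have hK1 : (0:ℝ) < 1 + K := by linarith
  set q : ℝ := r / α with hqdef
  have hq0 : 0 < q := div_pos hr0 hα0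
  have hqnD : q < (n:ℝ) - D := by
    rw [hqdef, div_lt_iff₀ hα0]
    nlinarith
  set δ : ℝ := ((n:ℝ) - D - q) / 2 with hδdef
  have hδ0 : 0 < δ := by rw [hδdef]; linarith
  obtain ⟨C, hC0, hCb⟩ := hsec δ hδ0
  set β : ℝ := (n:ℝ) - D - δ with hβdef
  have hqβ : q < β := by rw [hβdef, hδdef]; linarith
  have hβ0 : 0 < β := hq0.trans hqβ
  -- S is nonempty
  obtain ⟨x₀, hx₀⟩ := hS₀ne
  have hSne : S.Nonempty :=
    ⟨(0, Z 0 x₀), by rw [hS]; exact ⟨0, ⟨le_refl 0, hT.le⟩, x₀, hx₀, rfl⟩⟩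
  haveI : Nonempty ↥S := hSne.to_subtype
  -- lower bound for dS in terms of the sectional distance
  have hlow : ∀ t ∈ Icc (0:ℝ) T, ∀ x : En n,
      min 1 ((Metric.infDist x (Z t '' S₀) / (1 + K)) ^ (1/α)) ≤ dS S t x := by
    intro t ht x
    apply le_ciInf
    rintro ⟨p, hp⟩
    rw [hS] at hp
    obtain ⟨s, hs, y, hy, rfl⟩ := hp
    simp only [dS]
    set d : ℝ := Real.sqrt ((t - s)^2 + dist x (Z s y)^2) with hddef
    have hd0 : 0 ≤ d := Real.sqrt_nonneg _
    have hts : |t - s| ≤ d := by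
      rw [hddef, ← Real.sqrt_sq_eq_abs]
      exact Real.sqrt_le_sqrt (le_add_of_nonneg_right (sq_nonneg _))
    have hdist : dist x (Z s y) ≤ d := by
      have h := Real.sqrt_le_sqrt (le_add_of_nonneg_left (sq_nonneg (t - s)) :
        dist x (Z s y) ^ 2 ≤ (t - s) ^ 2 + dist x (Z s y) ^ 2)
      rwa [Real.sqrt_sq dist_nonneg] at h
    have hg_le : Metric.infDist x (Z t '' S₀) ≤ d + K * d ^ α := by
      have h1 : Metric.infDist x (Z t '' S₀) ≤ dist x (Z t y) :=
        Metric.infDist_le_dist_of_mem ⟨y, hy, rfl⟩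
      have h2 : dist x (Z t y) ≤ dist x (Z s y) + dist (Z s y) (Z t y) := dist_triangle _ _ _
      have h3 : dist (Z s y) (Z t y) ≤ K * |s - t| ^ α := hZ s hs t ht y hy
      have h4 : |s - t| ^ α ≤ d ^ α := by
        rw [abs_sub_comm]
        exact Real.rpow_le_rpow (abs_nonneg _) hts hα0.le
      have h5 : K * |s - t| ^ α ≤ K * d ^ α := by
        exact mul_le_mul_of_nonneg_left h4 hK.le
      linarith
    rcases le_or_gt 1 d with h1d | h1d
    · exact le_trans (min_le_left _ _) h1d
    · refine le_trans (min_le_right _ _) ?_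
      have hda : d ≤ d ^ α := by
        rcases hd0.eq_or_lt with h | h
        · rw [← h, Real.zero_rpow hα0.ne']
        · calc d = d ^ (1:ℝ) := (Real.rpow_one d).symm
            _ ≤ d ^ α := Real.rpow_le_rpow_of_exponent_ge h h1d.le hα1
      have hgd : Metric.infDist x (Z t '' S₀) / (1 + K) ≤ d ^ α := by
        rw [div_le_iff₀ hK1]
        nlinarith [Real.rpow_nonneg hd0 α]
      calc (Metric.infDist x (Z t '' S₀) / (1 + K)) ^ (1/α) ≤ (d ^ α) ^ (1/α) :=
            Real.rpow_le_rpow (div_nonneg Metric.infDist_nonneg hK1.le) hgd (by positivity)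
        _ = d := by
            rw [← Real.rpow_mul hd0, mul_one_div, div_self hα0.ne', Real.rpow_one]
  -- pointwise bound for the integrand
  have hpt : ∀ t ∈ Icc (0:ℝ) T, ∀ x : En n,
      dSInv S t x ^ r ≤ 1 + (ENNReal.ofReal (1 + K)) ^ q *
        ((ENNReal.ofReal (Metric.infDist x (Z t '' S₀)))⁻¹) ^ q := by
    intro t ht x
    set g := Metric.infDist x (Z t '' S₀) with hgdef
    have hg0 : 0 ≤ g := Metric.infDist_nonneg
    have hmin := hlow t ht x
    rcases le_total 1 ((g / (1 + K)) ^ (1/α)) with hw | hw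
    · have hd1 : (1:ℝ) ≤ dS S t x := le_trans (by rw [min_eq_left hw]) hmin
      have h1 : dSInv S t x ≤ 1 := by
        rw [dSInv, ENNReal.inv_le_one]
        exact ENNReal.one_le_ofReal.mpr hd1
      calc dSInv S t x ^ r ≤ (1:ℝ≥0∞) ^ r := ENNReal.rpow_le_rpow h1 hr0.le
        _ = 1 := ENNReal.one_rpow r
        _ ≤ _ := le_self_add
    · have hwd : (g / (1 + K)) ^ (1/α) ≤ dS S t x := le_trans (by rw [min_eq_right hw]) hmin
      have hinv : dSInv S t x ≤ (ENNReal.ofReal ((g / (1 + K)) ^ (1/α)))⁻¹ :=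
        ENNReal.inv_le_inv' (ENNReal.ofReal_le_ofReal hwd)
      have hgK0 : 0 ≤ g / (1 + K) := div_nonneg hg0 hK1.le
      have hc0 : ENNReal.ofReal (1 + K) ≠ 0 := by
        simp [ENNReal.ofReal_eq_zero, not_le, hK1]
      have e1 : ENNReal.ofReal ((g / (1 + K)) ^ (1/α))
          = (ENNReal.ofReal (g / (1 + K))) ^ (1/α) :=
        (ENNReal.ofReal_rpow_of_nonneg hgK0 (by positivity)).symm
      have e2 : (((ENNReal.ofReal (g / (1 + K))) ^ (1/α))⁻¹) ^ r
          = ((ENNReal.ofReal (g / (1 + K))) ^ q)⁻¹ := by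
        rw [ENNReal.inv_rpow, ← ENNReal.rpow_mul, one_div_mul_eq_div]
      have e3 : ((ENNReal.ofReal (g / (1 + K))) ^ q)⁻¹
          = (ENNReal.ofReal (1 + K)) ^ q * ((ENNReal.ofReal g)⁻¹) ^ q := by
        rw [ENNReal.ofReal_div_of_pos hK1, ENNReal.div_rpow_of_nonneg _ _ hq0.le,
          div_eq_mul_inv, ENNReal.mul_inv
            (Or.inr (by simp [ENNReal.rpow_eq_zero_iff, hc0, ENNReal.ofReal_ne_top]))
            (Or.inl (ENNReal.rpow_ne_top_of_nonneg hq0.le ENNReal.ofReal_ne_top)),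
          inv_inv, mul_comm, ENNReal.inv_rpow]
      calc dSInv S t x ^ r ≤ ((ENNReal.ofReal ((g / (1 + K)) ^ (1/α)))⁻¹) ^ r :=
            ENNReal.rpow_le_rpow hinv hr0.le
        _ = (ENNReal.ofReal (1 + K)) ^ q * ((ENNReal.ofReal g)⁻¹) ^ q := by
            rw [e1, e2, e3]
        _ ≤ _ := le_add_self
  -- notation for the constants
  set c : ℝ≥0∞ := ENNReal.ofReal (1 + K) with hcdef
  set ρ : ℝ≥0∞ := (2:ℝ≥0∞) ^ (q - β) with hρdef
  set A : ℝ≥0∞ := (2:ℝ≥0∞) ^ q * volume K' + ENNReal.ofReal C * (2:ℝ≥0∞) ^ (q + β)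
    with hAdef
  set B : ℝ≥0∞ := volume K' + c ^ q * (volume K' + A * (1 - ρ)⁻¹) with hBdef
  have hρ1 : ρ < 1 := ENNReal.rpow_lt_one_of_one_lt_of_neg (by norm_num) (by linarith)
  have hvK : volume K' ≠ ∞ := hK'.measure_lt_top.ne
  have htwo_ne : ∀ z : ℝ, (2:ℝ≥0∞) ^ z ≠ ∞ := fun z => by
    simp [ENNReal.rpow_eq_top_iff]
  have hB_ne : B ≠ ∞ := by
    have h2 : (1 - ρ)⁻¹ ≠ ∞ := by
      simp only [Ne, ENNReal.inv_eq_top, tsub_eq_zero_iff_le]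
      exact not_le.mpr hρ1
    refine ENNReal.add_ne_top.mpr ⟨hvK, ENNReal.mul_ne_top ?_ (ENNReal.add_ne_top.mpr
      ⟨hvK, ENNReal.mul_ne_top (ENNReal.add_ne_top.mpr
        ⟨ENNReal.mul_ne_top (htwo_ne q) hvK,
         ENNReal.mul_ne_top ENNReal.ofReal_ne_top (htwo_ne (q + β))⟩) h2⟩)⟩
    exact ENNReal.rpow_ne_top_of_nonneg hq0.le ENNReal.ofReal_ne_top
  -- the sectional integral bound, uniform in t
  have hint : ∀ t ∈ Icc (0:ℝ) T,
      ∫⁻ x in K', ((ENNReal.ofReal (Metric.infDist x (Z t '' S₀)))⁻¹) ^ q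
        ≤ volume K' + A * (1 - ρ)⁻¹ := by
    intro t ht
    set g : En n → ℝ := fun x => Metric.infDist x (Z t '' S₀) with hgdef
    have hgc : Continuous g := Metric.continuous_infDist_pt _
    have hAk : ∀ k : ℕ, MeasurableSet {x : En n | g x ≤ (2:ℝ) ^ (-(k:ℝ))} := fun k =>
      (isClosed_le hgc continuous_const).measurableSet
    have hsum_eq : (∫⁻ x in K',
          ∑' k : ℕ, (if g x ≤ (2:ℝ) ^ (-(k:ℝ)) then (2:ℝ≥0∞) ^ (q * ((k:ℝ) + 1)) else 0))
        = ∑' k : ℕ, (2:ℝ≥0∞) ^ (q * ((k:ℝ) + 1))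
            * volume ({x : En n | g x ≤ (2:ℝ) ^ (-(k:ℝ))} ∩ K') := by
      rw [lintegral_tsum (fun k =>
        (Measurable.ite (hAk k) measurable_const measurable_const).aemeasurable)]
      refine tsum_congr fun k => ?_
      have heq : (fun x : En n =>
          if g x ≤ (2:ℝ) ^ (-(k:ℝ)) then (2:ℝ≥0∞) ^ (q * ((k:ℝ) + 1)) else 0)
          = Set.indicator {x : En n | g x ≤ (2:ℝ) ^ (-(k:ℝ))}
              (fun _ => (2:ℝ≥0∞) ^ (q * ((k:ℝ) + 1))) := by
        funext x
        simp [Set.indicator_apply]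
      rw [heq, lintegral_indicator (hAk k), setLIntegral_const,
        Measure.restrict_apply (hAk k)]
    have hterm : ∀ k : ℕ, (2:ℝ≥0∞) ^ (q * ((k:ℝ) + 1))
          * volume ({x : En n | g x ≤ (2:ℝ) ^ (-(k:ℝ))} ∩ K') ≤ A * ρ ^ k := by
      intro k
      rcases Nat.eq_zero_or_pos k with hk | hk
      · subst hk
        calc (2:ℝ≥0∞) ^ (q * (((0:ℕ):ℝ) + 1)) * volume ({x : En n | g x ≤ (2:ℝ) ^ (-((0:ℕ):ℝ))} ∩ K')
            ≤ (2:ℝ≥0∞) ^ q * volume K' := by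
              rw [show q * (((0:ℕ):ℝ) + 1) = q by norm_num]
              exact mul_le_mul_right (measure_mono inter_subset_right) _
          _ ≤ A * ρ ^ 0 := by
              rw [pow_zero, mul_one, hAdef]
              exact le_self_add
      · have hk1 : (1:ℝ) ≤ (k:ℝ) := by exact_mod_cast hk
        have hε : (2:ℝ) ^ (1 - (k:ℝ)) ∈ Ioc (0:ℝ) 1 :=
          ⟨Real.rpow_pos_of_pos (by norm_num) _,
           Real.rpow_le_one_of_one_le_of_nonpos (by norm_num) (by linarith)⟩
        have hsub : {x : En n | g x ≤ (2:ℝ) ^ (-(k:ℝ))} ∩ K'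
            ⊆ {x : En n | Metric.infDist x (Z t '' S₀) < (2:ℝ) ^ (1 - (k:ℝ))} := by
          rintro x ⟨hx, -⟩
          exact lt_of_le_of_lt hx (Real.rpow_lt_rpow_of_exponent_lt (by norm_num) (by linarith))
        have hμ : volume ({x : En n | g x ≤ (2:ℝ) ^ (-(k:ℝ))} ∩ K')
            ≤ ENNReal.ofReal (C * ((2:ℝ) ^ (1 - (k:ℝ))) ^ β) :=
          le_trans (measure_mono hsub) (hCb t ht _ hε)
        have e : ENNReal.ofReal (C * ((2:ℝ) ^ (1 - (k:ℝ))) ^ β)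
            = ENNReal.ofReal C * (2:ℝ≥0∞) ^ ((1 - (k:ℝ)) * β) := by
          rw [ENNReal.ofReal_mul hC0.le, ← Real.rpow_mul (by positivity),
            ← ENNReal.ofReal_rpow_of_pos (by norm_num)]
          norm_num
        have hexp : (2:ℝ≥0∞) ^ (q * ((k:ℝ) + 1)) * (2:ℝ≥0∞) ^ ((1 - (k:ℝ)) * β)
            = (2:ℝ≥0∞) ^ (q + β) * ρ ^ k := by
          rw [hρdef, ← ENNReal.rpow_natCast ((2:ℝ≥0∞) ^ (q - β)) k, ← ENNReal.rpow_mul,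
            ← ENNReal.rpow_add _ _ (by norm_num) (by norm_num),
            ← ENNReal.rpow_add _ _ (by norm_num) (by norm_num)]
          congr 1
          ring
        calc (2:ℝ≥0∞) ^ (q * ((k:ℝ) + 1)) * volume ({x : En n | g x ≤ (2:ℝ) ^ (-(k:ℝ))} ∩ K')
            ≤ (2:ℝ≥0∞) ^ (q * ((k:ℝ) + 1))
              * (ENNReal.ofReal C * (2:ℝ≥0∞) ^ ((1 - (k:ℝ)) * β)) := by
              rw [← e]
              exact mul_le_mul_right hμ _
          _ = ENNReal.ofReal C * ((2:ℝ≥0∞) ^ (q + β) * ρ ^ k) := by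
              rw [← hexp]; ring
          _ ≤ A * ρ ^ k := by
              rw [hAdef, ← mul_assoc]
              exact mul_le_mul_left le_add_self _
    calc ∫⁻ x in K', ((ENNReal.ofReal (g x))⁻¹) ^ q
        ≤ ∫⁻ x in K', (1 + ∑' k : ℕ,
            (if g x ≤ (2:ℝ) ^ (-(k:ℝ)) then (2:ℝ≥0∞) ^ (q * ((k:ℝ) + 1)) else 0)) :=
          lintegral_mono fun x => dyadic_pointwise_bound Metric.infDist_nonneg hq0
      _ = volume K' + ∑' k : ℕ, (2:ℝ≥0∞) ^ (q * ((k:ℝ) + 1))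
            * volume ({x : En n | g x ≤ (2:ℝ) ^ (-(k:ℝ))} ∩ K') := by
          rw [lintegral_add_left measurable_const, setLIntegral_one, hsum_eq]
      _ ≤ volume K' + ∑' k : ℕ, A * ρ ^ k :=
          add_le_add_right (ENNReal.tsum_le_tsum hterm) _
      _ = volume K' + A * (1 - ρ)⁻¹ := by
          rw [ENNReal.tsum_mul_left, ENNReal.tsum_geometric]
  -- assemble
  refine ⟨B.toReal + 1, by positivity, ?_⟩
  intro t ht
  have hmain : ∫⁻ x in K', dSInv S t x ^ r ≤ B := by
    calc ∫⁻ x in K', dSInv S t x ^ r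
        ≤ ∫⁻ x in K', (1 + c ^ q *
            ((ENNReal.ofReal (Metric.infDist x (Z t '' S₀)))⁻¹) ^ q) :=
          lintegral_mono fun x => hpt t ht x
      _ = volume K' + c ^ q *
            ∫⁻ x in K', ((ENNReal.ofReal (Metric.infDist x (Z t '' S₀)))⁻¹) ^ q := by
          rw [lintegral_add_left measurable_const, setLIntegral_one,
            lintegral_const_mul' _ _ (ENNReal.rpow_ne_top_of_nonneg hq0.le
              ENNReal.ofReal_ne_top)]
      _ ≤ volume K' + c ^ q * (volume K' + A * (1 - ρ)⁻¹) :=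
          add_le_add_right (mul_le_mul_right (hint t ht) _) _
      _ = B := hBdef.symm
  refine hmain.trans ?_
  calc B = ENNReal.ofReal B.toReal := (ENNReal.ofReal_toReal hB_ne).symm
    _ ≤ ENNReal.ofReal (B.toReal + 1) := ENNReal.ofReal_le_ofReal (by linarith)
end

section
/- Let n ≥ 1, T > 0, let S₀ ⊆ ℝⁿ be nonempty, let 0 < α ≤ 1 and K > 0, and let Z : [0,T]×S₀ → ℝⁿ satisfy |Z(t₁,x) − Z(t₂,x)| ≤ K|t₁−t₂|^α for all t₁,t₂ ∈ [0,T] and all x ∈ S₀. Set S = {(t,Z(t,x)) : t ∈ [0,T], x ∈ S₀} ⊆ [0,T]×ℝⁿ and S(t) = {Z(t,x) : x ∈ S₀}. Then for every t ∈ [0,T] and x ∈ ℝⁿ one has d_S(t,x) ≤ d_{S(t)}(x), and whenever d_S(t,x) < 1 one has d_{S(t)}(x) ≤ (K+1) · d_S(t,x)^α. -/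
open MeasureTheory Set Filter ENNReal

open MeasureTheory Set Filter ENNReal in
/-- comparison between the space-time distance to the graph `S` of a family of
uniformly α-Hölder trajectories and the distance to its temporal sections. -/
theorem dS_section_comparison
    {n : ℕ} (hn : 1 ≤ n) (T : ℝ) (hT : 0 < T)
    (S₀ : Set (En n)) (hS₀ne : S₀.Nonempty)
    (α : ℝ) (hα0 : 0 < α) (hα1 : α ≤ 1) (K : ℝ) (hK : 0 < K)
    (Z : ℝ → En n → En n)
    (hZ : ∀ t₁ ∈ Icc (0:ℝ) T, ∀ t₂ ∈ Icc (0:ℝ) T, ∀ x ∈ S₀,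
      dist (Z t₁ x) (Z t₂ x) ≤ K * |t₁ - t₂| ^ α)
    (S : Set (ℝ × En n))
    (hS : S = {z : ℝ × En n | ∃ t ∈ Icc (0:ℝ) T, ∃ x ∈ S₀, z = (t, Z t x)}) :
    ∀ t ∈ Icc (0:ℝ) T, ∀ x : En n,
      dS S t x ≤ Metric.infDist x (Z t '' S₀) ∧
      (dS S t x < 1 → Metric.infDist x (Z t '' S₀) ≤ (K + 1) * dS S t x ^ α) := by
  intro t ht x
  obtain ⟨x₀, hx₀⟩ := hS₀ne
  have hSmem : (0, Z 0 x₀) ∈ S := by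
    rw [hS]; exact ⟨0, ⟨le_refl 0, hT.le⟩, x₀, hx₀, rfl⟩
  haveI : Nonempty S := ⟨⟨_, hSmem⟩⟩
  have hbdd : BddBelow (Set.range fun p : S =>
      Real.sqrt ((t - (p : ℝ × En n).1) ^ 2 + dist x (p : ℝ × En n).2 ^ 2)) := by
    refine ⟨0, ?_⟩
    rintro _ ⟨p, rfl⟩
    exact Real.sqrt_nonneg _
  have hd0 : 0 ≤ dS S t x := le_ciInf fun p => Real.sqrt_nonneg _
  constructor
  · -- dS ≤ infDist
    rw [Metric.infDist_eq_iInf]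
    haveI : Nonempty (Z t '' S₀) := ⟨⟨Z t x₀, mem_image_of_mem _ hx₀⟩⟩
    refine le_ciInf fun y => ?_
    obtain ⟨y, hy⟩ := y
    obtain ⟨x₁, hx₁, rfl⟩ := hy
    have hmem : (t, Z t x₁) ∈ S := by rw [hS]; exact ⟨t, ht, x₁, hx₁, rfl⟩
    have h := ciInf_le hbdd (⟨(t, Z t x₁), hmem⟩ : S)
    simp only [dS] at *
    calc dS S t x ≤ Real.sqrt ((t - t) ^ 2 + dist x (Z t x₁) ^ 2) := h
      _ = dist x (Z t x₁) := by
          rw [sub_self]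
          simp [Real.sqrt_sq dist_nonneg]
  · intro hlt
    set d := dS S t x with hdd
    have key : ∀ ε : ℝ, 0 < ε → d + ε < 1 →
        Metric.infDist x (Z t '' S₀) ≤ (K + 1) * (d + ε) ^ α := by
      intro ε hε hε1
      have : dS S t x < d + ε := by rw [← hdd]; linarith
      obtain ⟨⟨p, hp⟩, hplt⟩ := exists_lt_of_ciInf_lt this
      rw [hS] at hp
      obtain ⟨s, hs, x₁, hx₁, rfl⟩ := hp
      simp only at hplt
      set d' := Real.sqrt ((t - s) ^ 2 + dist x (Z s x₁) ^ 2) with hd'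
      have hd'0 : 0 ≤ d' := Real.sqrt_nonneg _
      have h1 : |t - s| ≤ d' := by
        rw [← Real.sqrt_sq_eq_abs]
        exact Real.sqrt_le_sqrt (by nlinarith [sq_nonneg (dist x (Z s x₁))])
      have h2 : dist x (Z s x₁) ≤ d' := by
        rw [← Real.sqrt_sq dist_nonneg]
        exact Real.sqrt_le_sqrt (by nlinarith [sq_nonneg (t - s)])
      have h3 : Metric.infDist x (Z t '' S₀) ≤ dist x (Z t x₁) :=
        Metric.infDist_le_dist_of_mem (mem_image_of_mem _ hx₁)
      have h4 : dist x (Z t x₁) ≤ dist x (Z s x₁) + dist (Z s x₁) (Z t x₁) :=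
        dist_triangle _ _ _
      have h5 : dist (Z s x₁) (Z t x₁) ≤ K * |s - t| ^ α := hZ s hs t ht x₁ hx₁
      have hde : 0 < d + ε := by linarith
      have h6 : |s - t| ^ α ≤ (d + ε) ^ α := by
        apply Real.rpow_le_rpow (abs_nonneg _) _ hα0.le
        rw [abs_sub_comm]
        linarith
      have h7 : d' ≤ (d + ε) ^ α := by
        calc d' ≤ d + ε := by linarith
          _ = (d + ε) ^ (1 : ℝ) := by rw [Real.rpow_one]
          _ ≤ (d + ε) ^ α := Real.rpow_le_rpow_of_exponent_ge hde hε1.le hα1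
      have hpow0 : (0 : ℝ) ≤ (d + ε) ^ α := Real.rpow_nonneg hde.le _
      nlinarith
    have hcont : Filter.Tendsto (fun ε : ℝ => (K + 1) * (d + ε) ^ α)
        (nhdsWithin 0 (Ioi 0)) (nhds ((K + 1) * d ^ α)) := by
      have hin : ContinuousAt (fun ε : ℝ => d + ε) 0 := continuousAt_const.add continuousAt_id
      have hrp : ContinuousAt (fun y : ℝ => y ^ α) (d + 0) :=
        Real.continuousAt_rpow_const (d + 0) α (Or.inr hα0.le)
      have hc : ContinuousAt (fun ε : ℝ => (K + 1) * (d + ε) ^ α) 0 :=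
        continuousAt_const.mul (hrp.comp hin)
      have := hc.continuousWithinAt (s := Ioi (0:ℝ))
      simpa [ContinuousWithinAt] using this
    refine ge_of_tendsto hcont ?_
    have hmem : Ioo (0:ℝ) (1 - d) ∈ nhdsWithin (0:ℝ) (Ioi 0) :=
      Ioo_mem_nhdsGT_of_mem ⟨le_refl (0:ℝ), by linarith⟩
    filter_upwards [hmem] with ε hε
    exact key ε hε.1 (by linarith [hε.2])
end

section
/- Let n ≥ 1, T > 0, let S ⊆ [0,T]×ℝⁿ be bounded and nonempty, and let α > 0 satisfy α < liminf_{ε→0⁺} log μ_{n+1}({(t,x) ∈ ℝ^{1+n} : d_S(t,x) < ε})/log ε (equivalently, by the Minkowski sausage formulation, α < n + 1 − dim_B S). Then for every compact K ⊆ ℝⁿ, ∫₀^T ∫_K d_S(t,x)^{−α} dx dt < ∞; in particular (α,α) belongs to the codimension print of S. -/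
open MeasureTheory Set Filter ENNReal

namespace IsoPrintAux

noncomputable def dTerm {n : ℕ} (z p : ℝ × En n) : ℝ :=
  Real.sqrt ((z.1 - p.1) ^ 2 + dist z.2 p.2 ^ 2)

lemma dS_eq {n : ℕ} (S : Set (ℝ × En n)) (z : ℝ × En n) :
    dS S z.1 z.2 = ⨅ p : S, dTerm z (p : ℝ × En n) := rfl

lemma dTerm_nonneg {n : ℕ} (z p : ℝ × En n) : 0 ≤ dTerm z p := Real.sqrt_nonneg _

lemma abs_fst_le_dTerm {n : ℕ} (z p : ℝ × En n) : |z.1 - p.1| ≤ dTerm z p := by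
  rw [← Real.sqrt_sq_eq_abs]
  exact Real.sqrt_le_sqrt (le_add_of_nonneg_right (by positivity))

lemma dist_snd_le_dTerm {n : ℕ} (z p : ℝ × En n) : dist z.2 p.2 ≤ dTerm z p := by
  have h : dist z.2 p.2 = |dist z.2 p.2| := (abs_of_nonneg dist_nonneg).symm
  rw [h, ← Real.sqrt_sq_eq_abs]
  exact Real.sqrt_le_sqrt (by nlinarith [sq_nonneg (z.1 - p.1)])

lemma dTerm_triangle {n : ℕ} (z w p : ℝ × En n) :
    dTerm z p ≤ dTerm w p + (|z.1 - w.1| + dist z.2 w.2) := by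
  set a := |w.1 - p.1|
  set b := dist w.2 p.2
  set u := |z.1 - w.1|
  set v := dist z.2 w.2
  have ha : 0 ≤ a := abs_nonneg _
  have hb : 0 ≤ b := dist_nonneg
  have hu : 0 ≤ u := abs_nonneg _
  have hv : 0 ≤ v := dist_nonneg
  set s := dTerm w p with hs
  have hs0 : 0 ≤ s := dTerm_nonneg _ _
  have hs2 : s ^ 2 = a ^ 2 + b ^ 2 := by
    rw [hs, dTerm, Real.sq_sqrt (by positivity), ← sq_abs (w.1 - p.1)]
  have hsa : a ≤ s := by nlinarith
  have hsb : b ≤ s := by nlinarith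
  have h1 : (z.1 - p.1) ^ 2 ≤ (a + u) ^ 2 := by
    rw [← sq_abs (z.1 - p.1)]
    have h : |z.1 - p.1| ≤ a + u := by
      calc |z.1 - p.1| = |(w.1 - p.1) + (z.1 - w.1)| := by ring_nf
        _ ≤ a + u := abs_add_le _ _
    nlinarith [abs_nonneg (z.1 - p.1)]
  have h2 : dist z.2 p.2 ^ 2 ≤ (b + v) ^ 2 := by
    have h : dist z.2 p.2 ≤ b + v := by
      calc dist z.2 p.2 ≤ dist z.2 w.2 + dist w.2 p.2 := dist_triangle _ _ _
        _ = b + v := by ring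
    nlinarith [dist_nonneg (x := z.2) (y := p.2)]
  calc dTerm z p ≤ Real.sqrt ((s + (u + v)) ^ 2) := by
        apply Real.sqrt_le_sqrt; nlinarith
    _ = s + (u + v) := Real.sqrt_sq (by positivity)

variable {n : ℕ} {S : Set (ℝ × En n)}

lemma bddBelow_range_dTerm (z : ℝ × En n) :
    BddBelow (Set.range fun p : S => dTerm z (p : ℝ × En n)) :=
  ⟨0, by rintro x ⟨q, rfl⟩; exact dTerm_nonneg _ _⟩

lemma dS_nonneg (hS : S.Nonempty) (z : ℝ × En n) : 0 ≤ dS S z.1 z.2 := by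
  have := hS.to_subtype
  rw [dS_eq]
  exact Real.iInf_nonneg fun p => dTerm_nonneg _ _

lemma dS_le_add (hS : S.Nonempty) (z w : ℝ × En n) :
    dS S z.1 z.2 ≤ dS S w.1 w.2 + (|z.1 - w.1| + dist z.2 w.2) := by
  have := hS.to_subtype
  rw [dS_eq, dS_eq, ← sub_le_iff_le_add]
  apply le_ciInf
  intro p
  rw [sub_le_iff_le_add]
  calc (⨅ q : S, dTerm z (q : ℝ × En n)) ≤ dTerm z (p : ℝ × En n) :=
        ciInf_le (bddBelow_range_dTerm z) p
    _ ≤ dTerm w (p : ℝ × En n) + (|z.1 - w.1| + dist z.2 w.2) := dTerm_triangle _ _ _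

lemma continuous_dS (hS : S.Nonempty) : Continuous (fun z : ℝ × En n => dS S z.1 z.2) := by
  have key : ∀ a b : ℝ × En n, dS S a.1 a.2 - dS S b.1 b.2 ≤ 2 * dist a b := by
    intro a b
    have h1 := dS_le_add hS a b
    have h2 : |a.1 - b.1| ≤ dist a b := by
      rw [← Real.dist_eq]; rw [Prod.dist_eq]; exact le_max_left _ _
    have h3 : dist a.2 b.2 ≤ dist a b := by rw [Prod.dist_eq]; exact le_max_right _ _
    linarith
  have L : LipschitzWith 2 (fun z : ℝ × En n => dS S z.1 z.2) := by
    apply LipschitzWith.of_dist_le_mul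
    intro z w
    rw [Real.dist_eq, abs_sub_le_iff]
    constructor
    · simpa using key z w
    · have := key w z
      rw [dist_comm] at this
      simpa using this
  exact L.continuous

lemma sausage_subset (hS : S.Nonempty) {ε : ℝ} :
    {z : ℝ × En n | dS S z.1 z.2 < ε} ⊆ Metric.thickening ε S := by
  intro z hz
  have := hS.to_subtype
  rw [Set.mem_setOf_eq, dS_eq] at hz
  obtain ⟨p, hp⟩ := exists_lt_of_ciInf_lt hz
  rw [Metric.mem_thickening_iff]
  refine ⟨p, p.2, ?_⟩
  rw [Prod.dist_eq]
  exact max_lt (lt_of_le_of_lt (by rw [Real.dist_eq]; exact abs_fst_le_dTerm z p) hp)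
    (lt_of_le_of_lt (dist_snd_le_dTerm z p) hp)

lemma sausage_finite (hSb : Bornology.IsBounded S) (hS : S.Nonempty) (ε : ℝ) :
    volume {z : ℝ × En n | dS S z.1 z.2 < ε} < ∞ := by
  calc volume {z : ℝ × En n | dS S z.1 z.2 < ε}
      ≤ volume (closure (Metric.thickening ε S)) :=
        measure_mono ((sausage_subset hS).trans subset_closure)
    _ < ∞ := (hSb.thickening.isCompact_closure).measure_lt_top

end IsoPrintAux

open MeasureTheory Set Filter ENNReal in
open IsoPrintAux in
/-- if `α < n + 1 − dim_B S` (Minkowski sausage form) then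
`∫₀^T ∫_K d_S(t,x)^{−α} dx dt < ∞` for every compact `K`; in particular `(α,α)` belongs to
the codimension print of `S`. -/
theorem isotropic_print_inclusion
    {n : ℕ} (hn : 1 ≤ n) (T : ℝ) (hT : 0 < T)
    (S : Set (ℝ × En n)) (hSb : Bornology.IsBounded S) (hSne : S.Nonempty)
    (hSsub : S ⊆ Icc (0:ℝ) T ×ˢ univ)
    (α : ℝ) (hα : 0 < α)
    (hbox : α < liminf
      (fun ε : ℝ => Real.log ((volume {z : ℝ × En n | dS S z.1 z.2 < ε}).toReal) / Real.log ε)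
      (nhdsWithin (0:ℝ) (Ioi 0))) :
    ∀ K : Set (En n), IsCompact K →
      ∫⁻ t in Ioo (0:ℝ) T, ∫⁻ x in K, (dSInv S t x) ^ α < ∞ := by
  intro K hK
  have hfc : Continuous (fun z : ℝ × En n => dS S z.1 z.2) := continuous_dS hSne
  set f : ℝ × En n → ℝ := fun z => dS S z.1 z.2 with hf
  have hfnn : ∀ z, 0 ≤ f z := dS_nonneg hSne
  set G : ℝ × En n → ℝ≥0∞ := fun z => (ENNReal.ofReal (f z))⁻¹ ^ α with hG
  have hGc : Continuous G :=
    ENNReal.continuous_rpow_const.comp (continuous_inv.comp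
      (ENNReal.continuous_ofReal.comp hfc))
  -- extract α' and threshold from the liminf hypothesis
  rw [Filter.liminf_eq] at hbox
  obtain ⟨α', hα'mem, hαα'⟩ := exists_lt_of_lt_csSup
    (Set.nonempty_iff_ne_empty.mpr fun h => by rw [h, Real.sSup_empty] at hbox; linarith) hbox
  rw [Set.mem_setOf_eq, Filter.eventually_iff] at hα'mem
  obtain ⟨u, hu0, hu⟩ := mem_nhdsGT_iff_exists_Ioo_subset.mp hα'mem
  set ε₁ : ℝ := min u 1 with hε₁
  have hε₁0 : 0 < ε₁ := lt_min hu0 one_pos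
  have hε₁1 : ε₁ ≤ 1 := min_le_right _ _
  have hα'0 : 0 < α' := hα.trans hαα'
  -- key measure bound
  have hkey : ∀ ε : ℝ, 0 < ε → ε < ε₁ → volume {z : ℝ × En n | f z < ε} ≤ ENNReal.ofReal (ε ^ α') := by
    intro ε hε0 hεlt
    have hεu : ε ∈ Ioo (0:ℝ) u := ⟨hε0, hεlt.trans_le (min_le_left _ _)⟩
    have hlog := hu hεu
    rw [Set.mem_setOf_eq] at hlog
    have hε1 : ε < 1 := hεlt.trans_le hε₁1
    have hlogε : Real.log ε < 0 := Real.log_neg hε0 hε1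
    rw [le_div_iff_of_neg hlogε] at hlog
    have h2 : (volume {z : ℝ × En n | f z < ε}).toReal ≤ ε ^ α' := by
      rcases eq_or_lt_of_le (ENNReal.toReal_nonneg :
          (0:ℝ) ≤ (volume {z : ℝ × En n | f z < ε}).toReal) with h | h
      · rw [← h]; positivity
      · rw [← Real.log_rpow hε0] at hlog
        exact (Real.log_le_log_iff h (Real.rpow_pos_of_pos hε0 α')).mp hlog
    exact (ENNReal.le_ofReal_iff_toReal_le (sausage_finite hSb hSne ε).ne (by positivity)).mpr h2
  -- domain
  have hKm : MeasurableSet K := hK.isClosed.measurableSet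
  set D : Set (ℝ × En n) := Ioo (0:ℝ) T ×ˢ K with hD
  have hDm : MeasurableSet D := measurableSet_Ioo.prod hKm
  have hDfin : volume D < ∞ := by
    calc volume D ≤ volume (closure D) := measure_mono subset_closure
      _ < ∞ := ((Metric.isBounded_Ioo 0 T).prod hK.isBounded).isCompact_closure.measure_lt_top
  -- dyadic decomposition
  set ε₂ : ℝ := ε₁ / 2 with hε₂
  have hε₂0 : 0 < ε₂ := by positivity
  set c : ℕ → ℝ := fun j => ε₂ * (1/2 : ℝ) ^ j with hc
  have hc0 : ∀ j, 0 < c j := fun j => by rw [hc]; positivity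
  have hclt : ∀ j, c j < ε₁ := by
    intro j
    have h1 : (1/2 : ℝ) ^ j ≤ 1 := pow_le_one₀ (by norm_num) (by norm_num)
    calc c j ≤ ε₂ * 1 := mul_le_mul_of_nonneg_left h1 hε₂0.le
      _ = ε₁ / 2 := by rw [mul_one]
      _ < ε₁ := by linarith
  set A : ℕ → Set (ℝ × En n) := fun j => D ∩ {z | c (j+1) ≤ f z ∧ f z < c j} with hA
  set B : Set (ℝ × En n) := D ∩ {z | ε₂ ≤ f z} with hB
  set Z : Set (ℝ × En n) := D ∩ {z | f z ≤ 0} with hZ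
  have hcover : D ⊆ (B ∪ Z) ∪ ⋃ j, A j := by
    intro z hz
    rcases le_or_gt ε₂ (f z) with h | h
    · exact Or.inl (Or.inl ⟨hz, h⟩)
    rcases le_or_gt (f z) 0 with h0 | h0
    · exact Or.inl (Or.inr ⟨hz, h0⟩)
    refine Or.inr ?_
    have hex : ∃ j : ℕ, c (j+1) ≤ f z := by
      obtain ⟨m, hm⟩ := exists_pow_lt_of_lt_one (div_pos h0 hε₂0) (by norm_num : (1/2:ℝ) < 1)
      refine ⟨m, le_of_lt ?_⟩
      have h1 : (1/2 : ℝ) ^ (m+1) ≤ (1/2 : ℝ) ^ m := by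
        apply pow_le_pow_of_le_one (by norm_num) (by norm_num); omega
      have h2 : ε₂ * (1/2:ℝ) ^ m < f z := by
        rw [lt_div_iff₀ hε₂0] at hm; linarith [hm]
      calc c (m+1) = ε₂ * (1/2:ℝ) ^ (m+1) := rfl
        _ ≤ ε₂ * (1/2:ℝ) ^ m := mul_le_mul_of_nonneg_left h1 hε₂0.le
        _ < f z := h2
    classical
    set j := Nat.find hex with hj
    have hj1 : c (j+1) ≤ f z := Nat.find_spec hex
    have hj2 : f z < c j := by
      rcases Nat.eq_zero_or_pos j with h0j | h0j
      · rw [h0j]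
        calc f z < ε₂ := h
          _ = c 0 := by rw [hc]; simp
      · obtain ⟨k, hk⟩ := Nat.exists_eq_add_of_lt h0j
        have hmin : ¬ c (k+1) ≤ f z := Nat.find_min hex (by omega)
        push_neg at hmin
        have : j = k + 1 := by omega
        rw [this]; exact hmin
    exact Set.mem_iUnion.mpr ⟨j, hz, hj1, hj2⟩
  -- bound on B
  have hBle : ∫⁻ z in B, G z ≤ (ENNReal.ofReal ε₂)⁻¹ ^ α * volume D := by
    calc ∫⁻ z in B, G z ≤ ∫⁻ _ in B, (ENNReal.ofReal ε₂)⁻¹ ^ α := by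
          apply setLIntegral_mono measurable_const
          intro z hz
          exact ENNReal.rpow_le_rpow
            (ENNReal.inv_le_inv.mpr (ENNReal.ofReal_le_ofReal hz.2)) hα.le
      _ = (ENNReal.ofReal ε₂)⁻¹ ^ α * volume B := setLIntegral_const _ _
      _ ≤ _ := mul_le_mul_right (measure_mono Set.inter_subset_left) _
  -- Z is null
  have hZ0 : volume Z = 0 := by
    have hb : ∀ᶠ ε in nhdsWithin (0:ℝ) (Ioi 0), volume Z ≤ ENNReal.ofReal (ε ^ α') := by
      filter_upwards [Ioo_mem_nhdsGT_of_mem (⟨le_refl (0:ℝ), hε₁0⟩ : (0:ℝ) ∈ Ico (0:ℝ) ε₁)]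
        with ε hε
      refine le_trans (measure_mono ?_) (hkey ε hε.1 hε.2)
      rintro z ⟨_, hz⟩
      exact lt_of_le_of_lt hz hε.1
    have ht : Tendsto (fun ε : ℝ => ENNReal.ofReal (ε ^ α')) (nhdsWithin (0:ℝ) (Ioi 0))
        (nhds 0) := by
      have h1 : Tendsto (fun ε : ℝ => ε ^ α') (nhds (0:ℝ)) (nhds ((0:ℝ) ^ α')) :=
        (Real.continuousAt_rpow_const 0 α' (Or.inr hα'0.le))
      rw [Real.zero_rpow hα'0.ne'] at h1
      have h2 := (ENNReal.continuous_ofReal.tendsto 0).comp (h1.mono_left (nhdsWithin_le_nhds (s := Ioi (0:ℝ))))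
      simpa [Function.comp_def] using h2
    exact le_zero_iff.mp (ge_of_tendsto ht hb)
  have hZle : ∫⁻ z in Z, G z = 0 := setLIntegral_measure_zero _ _ hZ0
  -- rpow conversion
  have hrpow_eq : ∀ x : ℝ, 0 < x → (ENNReal.ofReal x)⁻¹ ^ α = ENNReal.ofReal (x ^ (-α)) := by
    intro x hx
    rw [← ENNReal.ofReal_inv_of_pos hx, ENNReal.ofReal_rpow_of_pos (inv_pos.mpr hx),
        Real.inv_rpow hx.le, ← Real.rpow_neg hx.le]
  -- bound on A j
  have hAle : ∀ j : ℕ, ∫⁻ z in A j, G z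
      ≤ ENNReal.ofReal ((c (j+1)) ^ (-α)) * ENNReal.ofReal ((c j) ^ α') := by
    intro j
    calc ∫⁻ z in A j, G z ≤ ∫⁻ _ in A j, ENNReal.ofReal ((c (j+1)) ^ (-α)) := by
          apply setLIntegral_mono measurable_const
          rintro z ⟨hzD, hz1, hz2⟩
          rw [← hrpow_eq _ (hc0 (j+1))]
          exact ENNReal.rpow_le_rpow
            (ENNReal.inv_le_inv.mpr (ENNReal.ofReal_le_ofReal hz1)) hα.le
      _ = ENNReal.ofReal ((c (j+1)) ^ (-α)) * volume (A j) := setLIntegral_const _ _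
      _ ≤ ENNReal.ofReal ((c (j+1)) ^ (-α)) * ENNReal.ofReal ((c j) ^ α') := by
          apply mul_le_mul_right
          refine le_trans (measure_mono ?_) (hkey (c j) (hc0 j) (hclt j))
          rintro z ⟨hzD, hz1, hz2⟩
          exact hz2
  -- geometric series
  have h2 : (0:ℝ) < 1/2 := by norm_num
  have hq01 : (0:ℝ) < (1/2:ℝ) ^ (α' - α) := Real.rpow_pos_of_pos h2 _
  have hq1 : ((1/2:ℝ)) ^ (α' - α) < 1 :=
    Real.rpow_lt_one (by norm_num) (by norm_num) (by linarith)
  have hcalc : ∀ j : ℕ, (c (j+1)) ^ (-α) * (c j) ^ α'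
      = ((ε₂/2) ^ (-α) * ε₂ ^ α') * (((1/2:ℝ)) ^ (α' - α)) ^ j := by
    intro j
    have e0 : c (j+1) = (ε₂/2) * (1/2:ℝ)^j := by rw [hc]; simp only; rw [pow_succ]; ring
    have e1 : c j = ε₂ * (1/2:ℝ)^j := rfl
    rw [e0, e1, Real.mul_rpow (by positivity) (by positivity),
        Real.mul_rpow (by positivity) (by positivity), mul_mul_mul_comm]
    congr 1
    rw [← Real.rpow_natCast ((1/2:ℝ)) j, ← Real.rpow_mul h2.le, ← Real.rpow_mul h2.le,
        ← Real.rpow_add h2, ← Real.rpow_natCast ((1/2:ℝ) ^ (α'-α)) j, ← Real.rpow_mul h2.le]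
    congr 1
    push_cast
    ring
  have hsum : ∑' j : ℕ, ∫⁻ z in A j, G z < ∞ := by
    have hb : ∑' j : ℕ, ∫⁻ z in A j, G z
        ≤ ENNReal.ofReal ((ε₂/2) ^ (-α) * ε₂ ^ α')
          * (1 - ENNReal.ofReal ((1/2:ℝ) ^ (α'-α)))⁻¹ := by
      calc ∑' j : ℕ, ∫⁻ z in A j, G z
          ≤ ∑' j : ℕ, ENNReal.ofReal ((c (j+1)) ^ (-α)) * ENNReal.ofReal ((c j) ^ α') :=
            ENNReal.tsum_le_tsum hAle
        _ = ∑' j : ℕ, ENNReal.ofReal ((ε₂/2) ^ (-α) * ε₂ ^ α')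
              * (ENNReal.ofReal ((1/2:ℝ) ^ (α'-α))) ^ j := by
            congr 1; funext j
            rw [← ENNReal.ofReal_mul (by positivity), hcalc j,
                ENNReal.ofReal_mul (by positivity), ENNReal.ofReal_pow hq01.le]
        _ = _ := by rw [ENNReal.tsum_mul_left, ENNReal.tsum_geometric]
    refine lt_of_le_of_lt hb (ENNReal.mul_lt_top ENNReal.ofReal_lt_top ?_)
    rw [ENNReal.inv_lt_top]
    exact tsub_pos_of_lt (ENNReal.ofReal_lt_one.mpr hq1)
  -- assemble
  have hmain : ∫⁻ z in D, G z < ∞ := by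
    calc ∫⁻ z in D, G z ≤ ∫⁻ z in (B ∪ Z) ∪ ⋃ j, A j, G z := lintegral_mono_set hcover
      _ ≤ (∫⁻ z in B ∪ Z, G z) + ∫⁻ z in ⋃ j, A j, G z := lintegral_union_le _ _ _
      _ ≤ ((∫⁻ z in B, G z) + ∫⁻ z in Z, G z) + ∑' j : ℕ, ∫⁻ z in A j, G z :=
          add_le_add (lintegral_union_le _ _ _) (lintegral_iUnion_le _ _)
      _ < ∞ := by
          rw [hZle, add_zero]
          refine ENNReal.add_lt_top.mpr ⟨lt_of_le_of_lt hBle (ENNReal.mul_lt_top ?_ hDfin), hsum⟩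
          exact ENNReal.rpow_lt_top_of_nonneg hα.le
            (ENNReal.inv_ne_top.mpr (ENNReal.ofReal_pos.mpr hε₂0).ne')
  calc ∫⁻ t in Ioo (0:ℝ) T, ∫⁻ x in K, (dSInv S t x) ^ α
      = ∫⁻ z, G z ∂((volume.restrict (Ioo (0:ℝ) T)).prod (volume.restrict K)) := by
        rw [MeasureTheory.lintegral_prod _ hGc.measurable.aemeasurable]
        rfl
    _ = ∫⁻ z in D, G z := by
        rw [Measure.prod_restrict, ← Measure.volume_eq_prod, ← hD]
    _ < ∞ := hmain
end

section
/- Let n ≥ 1, T > 0, let S ⊆ [0,T]×ℝⁿ be bounded and nonempty, and let α > 0 satisfy α > limsup_{ε→0⁺} log μ_{n+1}({(t,x) ∈ ℝ^{1+n} : d_S(t,x) < ε})/log ε (equivalently, by the Minkowski sausage formulation, α > n + 1 − dim_LB S). Then there exists a compact set K ⊆ ℝⁿ with ∫₀^T ∫_K d_S(t,x)^{−α} dx dt = ∞; in particular (α,α) does not belong to the codimension print of S. -/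
open MeasureTheory Set Filter ENNReal

open MeasureTheory Set Filter ENNReal

section AuxIso

private lemma sqrt_add_sq_le_add (a₁ b₁ a₂ b₂ : ℝ) :
    Real.sqrt ((a₁ + a₂) ^ 2 + (b₁ + b₂) ^ 2) ≤
      Real.sqrt (a₁ ^ 2 + b₁ ^ 2) + Real.sqrt (a₂ ^ 2 + b₂ ^ 2) := by
  set s₁ := Real.sqrt (a₁ ^ 2 + b₁ ^ 2) with hs₁
  set s₂ := Real.sqrt (a₂ ^ 2 + b₂ ^ 2) with hs₂
  have h₁ : 0 ≤ s₁ := Real.sqrt_nonneg _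
  have h₂ : 0 ≤ s₂ := Real.sqrt_nonneg _
  have e₁ : s₁ ^ 2 = a₁ ^ 2 + b₁ ^ 2 := Real.sq_sqrt (by positivity)
  have e₂ : s₂ ^ 2 = a₂ ^ 2 + b₂ ^ 2 := Real.sq_sqrt (by positivity)
  have key : a₁ * a₂ + b₁ * b₂ ≤ s₁ * s₂ := by
    nlinarith [sq_nonneg (a₁ * b₂ - a₂ * b₁), mul_nonneg h₁ h₂,
      sq_nonneg (s₁ * s₂ - a₁ * a₂ - b₁ * b₂), sq_nonneg (s₁ * s₂ + a₁ * a₂ + b₁ * b₂)]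
  have hle : (a₁ + a₂) ^ 2 + (b₁ + b₂) ^ 2 ≤ (s₁ + s₂) ^ 2 := by nlinarith
  calc Real.sqrt ((a₁ + a₂) ^ 2 + (b₁ + b₂) ^ 2) ≤ Real.sqrt ((s₁ + s₂) ^ 2) :=
        Real.sqrt_le_sqrt hle
  _ = s₁ + s₂ := Real.sqrt_sq (by positivity)

private lemma abs_le_sqrt_add (a b : ℝ) : |a| ≤ Real.sqrt (a ^ 2 + b ^ 2) := by
  rw [← Real.sqrt_sq_eq_abs]
  exact Real.sqrt_le_sqrt (by nlinarith [sq_nonneg b])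

private lemma le_sqrt_add (a b : ℝ) (hb : 0 ≤ b) : b ≤ Real.sqrt (a ^ 2 + b ^ 2) := by
  have h := Real.sq_sqrt (show (0:ℝ) ≤ a ^ 2 + b ^ 2 by positivity)
  have h2 := Real.sqrt_nonneg (a ^ 2 + b ^ 2)
  nlinarith [sq_nonneg a]

private lemma sqrt_le_abs_add (a b : ℝ) : Real.sqrt (a ^ 2 + b ^ 2) ≤ |a| + |b| := by
  have h := sqrt_add_sq_le_add a 0 0 b
  simpa [Real.sqrt_sq_eq_abs] using h

private lemma dS_bddBelow {n : ℕ} (S : Set (ℝ × En n)) (t : ℝ) (x : En n) :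
    BddBelow (Set.range fun p : S =>
      Real.sqrt ((t - (p : ℝ × En n).1) ^ 2 + dist x (p : ℝ × En n).2 ^ 2)) :=
  ⟨0, by rintro y ⟨p, rfl⟩; positivity⟩

private lemma dS_le_pt {n : ℕ} {S : Set (ℝ × En n)} {p : ℝ × En n} (hp : p ∈ S) (t : ℝ)
    (x : En n) : dS S t x ≤ Real.sqrt ((t - p.1) ^ 2 + dist x p.2 ^ 2) :=
  ciInf_le (dS_bddBelow S t x) ⟨p, hp⟩

private lemma exists_of_dS_lt {n : ℕ} {S : Set (ℝ × En n)} (hSne : S.Nonempty) {t : ℝ}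
    {x : En n} {ε : ℝ} (h : dS S t x < ε) :
    ∃ p ∈ S, Real.sqrt ((t - p.1) ^ 2 + dist x p.2 ^ 2) < ε := by
  haveI := hSne.to_subtype
  obtain ⟨p, hp⟩ := exists_lt_of_ciInf_lt h
  exact ⟨p, p.2, hp⟩

private lemma dS_le_dS {n : ℕ} {S : Set (ℝ × En n)} {t t' : ℝ} (x : En n)
    (h : ∀ p ∈ S, (t' - p.1) ^ 2 ≤ (t - p.1) ^ 2) : dS S t' x ≤ dS S t x :=
  ciInf_mono (dS_bddBelow S t' x) fun p =>
    Real.sqrt_le_sqrt (by have := h p p.2; linarith)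

private lemma dS_le_add {n : ℕ} {S : Set (ℝ × En n)} (hSne : S.Nonempty) (t : ℝ) (x : En n)
    (t' : ℝ) (x' : En n) :
    dS S t' x' ≤ dS S t x + (|t' - t| + dist x' x) := by
  haveI := hSne.to_subtype
  rw [← sub_le_iff_le_add]
  apply le_ciInf; intro p
  rw [sub_le_iff_le_add]
  have h1 : dS S t' x' ≤ Real.sqrt ((t' - (p : ℝ × En n).1) ^ 2 +
      (dist x (p : ℝ × En n).2 + dist x' x) ^ 2) := by
    refine le_trans (dS_le_pt p.2 t' x') (Real.sqrt_le_sqrt ?_)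
    have htr : dist x' (p : ℝ × En n).2 ≤ dist x' x + dist x (p : ℝ × En n).2 :=
      dist_triangle _ _ _
    have d1 : (0:ℝ) ≤ dist x' (p : ℝ × En n).2 := dist_nonneg
    have d2 : (0:ℝ) ≤ dist x' x := dist_nonneg
    have d3 : (0:ℝ) ≤ dist x (p : ℝ × En n).2 := dist_nonneg
    nlinarith
  have h2 : (t' - (p : ℝ × En n).1) = (t - (p : ℝ × En n).1) + (t' - t) := by ring
  rw [h2] at h1
  have h3 := sqrt_add_sq_le_add (t - (p : ℝ × En n).1) (dist x (p : ℝ × En n).2) (t' - t)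
    (dist x' x)
  have h4 : Real.sqrt ((t' - t) ^ 2 + dist x' x ^ 2) ≤ |t' - t| + dist x' x := by
    have := sqrt_le_abs_add (t' - t) (dist x' x)
    rwa [abs_of_nonneg dist_nonneg] at this
  calc dS S t' x' ≤ _ := h1
  _ ≤ Real.sqrt ((t - (p : ℝ × En n).1) ^ 2 + dist x (p : ℝ × En n).2 ^ 2) +
      Real.sqrt ((t' - t) ^ 2 + dist x' x ^ 2) := h3
  _ ≤ Real.sqrt ((t - (p : ℝ × En n).1) ^ 2 + dist x (p : ℝ × En n).2 ^ 2) +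
      (|t' - t| + dist x' x) := by linarith

private lemma isOpen_sausage {n : ℕ} {S : Set (ℝ × En n)} (hSne : S.Nonempty) (ε : ℝ) :
    IsOpen {z : ℝ × En n | dS S z.1 z.2 < ε} := by
  rw [Metric.isOpen_iff]
  intro z hz
  simp only [mem_setOf_eq] at hz
  refine ⟨(ε - dS S z.1 z.2) / 2, by linarith, fun w hw => ?_⟩
  simp only [mem_setOf_eq]
  have h1 := dS_le_add hSne z.1 z.2 w.1 w.2
  have h2 : |w.1 - z.1| ≤ dist w z := by
    rw [Prod.dist_eq, ← Real.dist_eq]; exact le_max_left _ _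
  have h3 : dist w.2 z.2 ≤ dist w z := by
    rw [Prod.dist_eq]; exact le_max_right _ _
  have hwz : dist w z < (ε - dS S z.1 z.2) / 2 := Metric.mem_ball.1 hw
  linarith

private lemma reflect_bound {n : ℕ} {S : Set (ℝ × En n)} {T ε : ℝ}
    (hSne : S.Nonempty) (hSsub : S ⊆ Icc (0:ℝ) T ×ˢ univ)
    (hε0 : 0 < ε) (hεT : ε < T) :
    volume {z : ℝ × En n | dS S z.1 z.2 < ε} ≤
      3 * volume ({z : ℝ × En n | dS S z.1 z.2 < ε} ∩ Ioo 0 T ×ˢ univ) := by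
  set A := {z : ℝ × En n | dS S z.1 z.2 < ε} with hA
  have hAm : MeasurableSet A := (isOpen_sausage hSne ε).measurableSet
  set A₀ := A ∩ Ioo 0 T ×ˢ univ with hA₀
  have hr : ∀ c : ℝ, MeasurePreserving (fun z : ℝ × En n => (c - z.1, z.2)) volume volume := by
    intro c
    rw [Measure.volume_eq_prod]
    exact (Measure.measurePreserving_sub_left volume c).prod (MeasurePreserving.id volume)
  have hnull : ∀ c : ℝ, volume (({c} : Set ℝ) ×ˢ (univ : Set (En n))) = 0 := by
    intro c
    rw [Measure.volume_eq_prod, Measure.prod_prod, Real.volume_singleton, zero_mul]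
  have hbot : volume {z : ℝ × En n | z ∈ A ∧ z.1 ≤ 0} ≤ volume A₀ := by
    have hsub : {z : ℝ × En n | z ∈ A ∧ z.1 ≤ 0} ⊆
        (fun z : ℝ × En n => ((0:ℝ) - z.1, z.2)) ⁻¹' (A ∩ Ico 0 ε ×ˢ univ) := by
      rintro ⟨t, x⟩ ⟨hzA, ht⟩
      simp only [mem_setOf_eq] at hzA ht
      obtain ⟨p, hpS, hp⟩ := exists_of_dS_lt hSne hzA
      have hp1 : p.1 ∈ Icc (0:ℝ) T := (hSsub hpS).1
      have habs : |t - p.1| < ε := lt_of_le_of_lt (abs_le_sqrt_add _ _) hp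
      have habs' := abs_lt.1 habs
      simp only [mem_preimage, mem_inter_iff, mem_setOf_eq, mem_prod, mem_Ico, mem_univ,
        and_true]
      refine ⟨?_, by linarith, by linarith [habs'.1, hp1.1]⟩
      refine lt_of_le_of_lt (dS_le_dS x fun q hqS => ?_) hzA
      have hq1 := (hSsub hqS).1.1
      show ((0:ℝ) - t - q.1) ^ 2 ≤ (t - q.1) ^ 2
      nlinarith
    have hWm : MeasurableSet (A ∩ Ico 0 ε ×ˢ univ) :=
      hAm.inter (measurableSet_Ico.prod MeasurableSet.univ)
    calc volume {z : ℝ × En n | z ∈ A ∧ z.1 ≤ 0}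
        ≤ volume ((fun z : ℝ × En n => ((0:ℝ) - z.1, z.2)) ⁻¹' (A ∩ Ico 0 ε ×ˢ univ)) :=
          measure_mono hsub
      _ = volume (A ∩ Ico 0 ε ×ˢ univ) := (hr 0).measure_preimage hWm.nullMeasurableSet
      _ ≤ volume (A₀ ∪ ({(0:ℝ)} : Set ℝ) ×ˢ (univ : Set (En n))) := by
          refine measure_mono ?_
          rintro ⟨t, x⟩ ⟨hzA, ⟨ht, _⟩⟩
          rcases eq_or_lt_of_le ht.1 with h0 | h0
          · exact Or.inr ⟨h0.symm, mem_univ _⟩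
          · exact Or.inl ⟨hzA, ⟨h0, lt_trans ht.2 hεT⟩, mem_univ _⟩
      _ ≤ volume A₀ + volume (({(0:ℝ)} : Set ℝ) ×ˢ (univ : Set (En n))) := measure_union_le _ _
      _ = volume A₀ := by rw [hnull, add_zero]
  have htop : volume {z : ℝ × En n | z ∈ A ∧ T ≤ z.1} ≤ volume A₀ := by
    have hsub : {z : ℝ × En n | z ∈ A ∧ T ≤ z.1} ⊆
        (fun z : ℝ × En n => (2 * T - z.1, z.2)) ⁻¹' (A ∩ Ioc (T - ε) T ×ˢ univ) := by
      rintro ⟨t, x⟩ ⟨hzA, ht⟩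
      simp only [mem_setOf_eq] at hzA ht
      obtain ⟨p, hpS, hp⟩ := exists_of_dS_lt hSne hzA
      have hp1 : p.1 ∈ Icc (0:ℝ) T := (hSsub hpS).1
      have habs : |t - p.1| < ε := lt_of_le_of_lt (abs_le_sqrt_add _ _) hp
      have habs' := abs_lt.1 habs
      simp only [mem_preimage, mem_inter_iff, mem_setOf_eq, mem_prod, mem_Ioc, mem_univ,
        and_true]
      refine ⟨?_, by linarith [habs'.2, hp1.2], by linarith⟩
      refine lt_of_le_of_lt (dS_le_dS x fun q hqS => ?_) hzA
      have hq1 := (hSsub hqS).1.2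
      show (2 * T - t - q.1) ^ 2 ≤ (t - q.1) ^ 2
      nlinarith
    have hWm : MeasurableSet (A ∩ Ioc (T - ε) T ×ˢ univ) :=
      hAm.inter (measurableSet_Ioc.prod MeasurableSet.univ)
    calc volume {z : ℝ × En n | z ∈ A ∧ T ≤ z.1}
        ≤ volume ((fun z : ℝ × En n => (2 * T - z.1, z.2)) ⁻¹' (A ∩ Ioc (T - ε) T ×ˢ univ)) :=
          measure_mono hsub
      _ = volume (A ∩ Ioc (T - ε) T ×ˢ univ) := (hr (2 * T)).measure_preimage
            hWm.nullMeasurableSet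
      _ ≤ volume (A₀ ∪ ({T} : Set ℝ) ×ˢ (univ : Set (En n))) := by
          refine measure_mono ?_
          rintro ⟨t, x⟩ ⟨hzA, ⟨ht, _⟩⟩
          rcases eq_or_lt_of_le ht.2 with hT' | hT'
          · exact Or.inr ⟨hT', mem_univ _⟩
          · exact Or.inl ⟨hzA, ⟨by linarith [ht.1], hT'⟩, mem_univ _⟩
      _ ≤ volume A₀ + volume (({T} : Set ℝ) ×ˢ (univ : Set (En n))) := measure_union_le _ _
      _ = volume A₀ := by rw [hnull, add_zero]
  have hcover : A ⊆ {z : ℝ × En n | z ∈ A ∧ z.1 ≤ 0} ∪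
      (A₀ ∪ {z : ℝ × En n | z ∈ A ∧ T ≤ z.1}) := by
    intro z hz
    rcases le_or_gt z.1 0 with h0 | h0
    · exact Or.inl ⟨hz, h0⟩
    rcases le_or_gt T z.1 with hT' | hT'
    · exact Or.inr (Or.inr ⟨hz, hT'⟩)
    · exact Or.inr (Or.inl ⟨hz, ⟨h0, hT'⟩, mem_univ _⟩)
  calc volume A ≤ volume ({z : ℝ × En n | z ∈ A ∧ z.1 ≤ 0} ∪
      (A₀ ∪ {z : ℝ × En n | z ∈ A ∧ T ≤ z.1})) := measure_mono hcover
  _ ≤ volume {z : ℝ × En n | z ∈ A ∧ z.1 ≤ 0} +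
      (volume A₀ + volume {z : ℝ × En n | z ∈ A ∧ T ≤ z.1}) :=
        le_trans (measure_union_le _ _) (by gcongr; exact measure_union_le _ _)
  _ ≤ volume A₀ + (volume A₀ + volume A₀) := by gcongr
  _ = 3 * volume A₀ := by ring

private lemma integral_lower {n : ℕ} {S : Set (ℝ × En n)} (hSne : S.Nonempty) {T ε α : ℝ}
    {K : Set (En n)} (hK : MeasurableSet K)
    (hsub : {z : ℝ × En n | dS S z.1 z.2 < ε} ∩ Ioo 0 T ×ˢ univ ⊆ Ioo 0 T ×ˢ K)
    (hε0 : 0 < ε) (hα : 0 < α) :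
    (ENNReal.ofReal ε)⁻¹ ^ α *
        volume ({z : ℝ × En n | dS S z.1 z.2 < ε} ∩ Ioo 0 T ×ˢ univ)
      ≤ ∫⁻ t in Ioo (0:ℝ) T, ∫⁻ x in K, (dSInv S t x) ^ α := by
  set A₀ := {z : ℝ × En n | dS S z.1 z.2 < ε} ∩ Ioo 0 T ×ˢ univ with hA₀
  have hA₀m : MeasurableSet A₀ :=
    ((isOpen_sausage hSne ε).measurableSet).inter
      ((measurableSet_Ioo).prod MeasurableSet.univ)
  set c := (ENNReal.ofReal ε)⁻¹ ^ α with hc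
  have hcne : c ≠ ⊤ :=
    ENNReal.rpow_ne_top_of_nonneg hα.le (ENNReal.inv_ne_top.2 (ENNReal.ofReal_pos.2 hε0).ne')
  have step1 : ∀ t : ℝ, c * (volume.restrict K) (Prod.mk t ⁻¹' A₀) ≤
      ∫⁻ x in K, (dSInv S t x) ^ α := by
    intro t
    have hslice : MeasurableSet (Prod.mk t ⁻¹' A₀) := hA₀m.preimage measurable_prodMk_left
    calc c * (volume.restrict K) (Prod.mk t ⁻¹' A₀)
        = ∫⁻ x in Prod.mk t ⁻¹' A₀, c ∂(volume.restrict K) := (setLIntegral_const _ _).symm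
      _ = ∫⁻ x, (Prod.mk t ⁻¹' A₀).indicator (fun _ => c) x ∂(volume.restrict K) :=
          (lintegral_indicator hslice _).symm
      _ ≤ ∫⁻ x in K, (dSInv S t x) ^ α := by
          refine lintegral_mono fun x => ?_
          by_cases hx : x ∈ Prod.mk t ⁻¹' A₀
          · rw [indicator_of_mem hx]
            have hd : dS S t x < ε := hx.1
            have h1 : ENNReal.ofReal (dS S t x) ≤ ENNReal.ofReal ε :=
              ENNReal.ofReal_le_ofReal hd.le
            exact ENNReal.rpow_le_rpow (ENNReal.inv_le_inv.2 h1) hα.le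
          · rw [indicator_of_notMem hx]; exact zero_le
  have step2 : ((volume.restrict (Ioo (0:ℝ) T)).prod (volume.restrict K)) A₀ = volume A₀ := by
    rw [Measure.prod_restrict, ← Measure.volume_eq_prod, Measure.restrict_apply hA₀m,
      inter_eq_self_of_subset_left hsub]
  calc c * volume A₀ = c * ∫⁻ t in Ioo (0:ℝ) T, (volume.restrict K) (Prod.mk t ⁻¹' A₀) := by
        rw [← Measure.prod_apply hA₀m, step2]
  _ = ∫⁻ t in Ioo (0:ℝ) T, c * (volume.restrict K) (Prod.mk t ⁻¹' A₀) :=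
        (lintegral_const_mul' _ _ hcne).symm
  _ ≤ ∫⁻ t in Ioo (0:ℝ) T, ∫⁻ x in K, (dSInv S t x) ^ α := lintegral_mono step1

end AuxIso

open scoped Topology

open MeasureTheory Set Filter ENNReal in
/-- if `α > n + 1 − dim_LB S` (Minkowski sausage form) then
`∫₀^T ∫_K d_S(t,x)^{−α} dx dt = ∞` for some compact `K`; in particular `(α,α)` does not
belong to the codimension print of `S`. -/
theorem isotropic_print_exclusion
    {n : ℕ} (hn : 1 ≤ n) (T : ℝ) (hT : 0 < T)
    (S : Set (ℝ × En n)) (hSb : Bornology.IsBounded S) (hSne : S.Nonempty)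
    (hSsub : S ⊆ Icc (0:ℝ) T ×ˢ univ)
    (α : ℝ) (hα : 0 < α)
    (hbox : limsup
      (fun ε : ℝ => Real.log ((volume {z : ℝ × En n | dS S z.1 z.2 < ε}).toReal) / Real.log ε)
      (nhdsWithin (0:ℝ) (Ioi 0)) < α) :
    ∃ K : Set (En n), IsCompact K ∧
      ∫⁻ t in Ioo (0:ℝ) T, ∫⁻ x in K, (dSInv S t x) ^ α = ∞ := by
  classical
  obtain ⟨p₀, hp₀S⟩ := hSne
  have hSne' : S.Nonempty := ⟨p₀, hp₀S⟩
  obtain ⟨R, hR⟩ := (Metric.isBounded_iff_subset_closedBall p₀).1 hSb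
  have hR0 : 0 ≤ R := by have := hR hp₀S; simpa using this
  haveI : Nonempty (Fin n) := ⟨⟨0, hn⟩⟩
  haveI : Nontrivial (En n) := inferInstance
  set Kr := ‖p₀.2‖ + R + 1 with hKr
  refine ⟨Metric.closedBall 0 Kr, isCompact_closedBall _ _, ?_⟩
  -- spatial containment
  have hspace : ∀ ε : ℝ, ε ≤ 1 → {z : ℝ × En n | dS S z.1 z.2 < ε} ∩ Ioo 0 T ×ˢ univ ⊆
      Ioo 0 T ×ˢ Metric.closedBall 0 Kr := by
    rintro ε hε1 z ⟨hzA, hzT, -⟩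
    refine ⟨hzT, ?_⟩
    obtain ⟨p, hpS, hp⟩ := exists_of_dS_lt hSne' hzA
    have hd : dist z.2 p.2 ≤ 1 := le_trans (le_trans (le_sqrt_add _ _ dist_nonneg) hp.le) hε1
    have hp2 : dist p.2 p₀.2 ≤ R := by
      have h := hR hpS
      rw [Metric.mem_closedBall, Prod.dist_eq] at h
      exact le_trans (le_max_right _ _) h
    rw [Metric.mem_closedBall]
    calc dist z.2 0 ≤ dist z.2 p.2 + dist p.2 p₀.2 + dist p₀.2 0 := dist_triangle4 _ _ _ _
      _ ≤ 1 + R + ‖p₀.2‖ := by rw [dist_zero_right]; linarith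
      _ ≤ Kr := by rw [hKr]; linarith
  -- finiteness of the sausage measure
  have hfin : ∀ ε : ℝ, 0 < ε → ε ≤ 1 → volume {z : ℝ × En n | dS S z.1 z.2 < ε} ≠ ⊤ := by
    intro ε hε0 hε1
    have hsub : {z : ℝ × En n | dS S z.1 z.2 < ε} ⊆
        Metric.closedBall p₀.1 (R + 1) ×ˢ Metric.closedBall p₀.2 (R + 1) := by
      intro z hz
      obtain ⟨p, hpS, hp⟩ := exists_of_dS_lt hSne' hz
      have h1 : |z.1 - p.1| ≤ 1 := le_trans (le_trans (abs_le_sqrt_add _ _) hp.le) hε1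
      have h2 : dist z.2 p.2 ≤ 1 := le_trans (le_trans (le_sqrt_add _ _ dist_nonneg) hp.le) hε1
      have hpd := hR hpS
      rw [Metric.mem_closedBall, Prod.dist_eq] at hpd
      constructor
      · rw [Metric.mem_closedBall, Real.dist_eq]
        have h3 : dist p.1 p₀.1 ≤ R := le_trans (le_max_left _ _) hpd
        rw [Real.dist_eq] at h3
        calc |z.1 - p₀.1| ≤ |z.1 - p.1| + |p.1 - p₀.1| := abs_sub_le _ _ _
          _ ≤ R + 1 := by linarith
      · rw [Metric.mem_closedBall]
        have h3 : dist p.2 p₀.2 ≤ R := le_trans (le_max_right _ _) hpd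
        calc dist z.2 p₀.2 ≤ dist z.2 p.2 + dist p.2 p₀.2 := dist_triangle _ _ _
          _ ≤ R + 1 := by linarith
    refine ne_top_of_le_ne_top ?_ (measure_mono hsub)
    rw [Measure.volume_eq_prod, Measure.prod_prod]
    exact ENNReal.mul_ne_top measure_closedBall_lt_top.ne measure_closedBall_lt_top.ne
  -- rectangle inside the sausage
  have hrect : ∀ ε : ℝ, 0 < ε →
      ENNReal.ofReal ε * volume (Metric.ball p₀.2 (ε / 2)) ≤
        volume {z : ℝ × En n | dS S z.1 z.2 < ε} := by
    intro ε hε0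
    have hsub : Ioo (p₀.1 - ε / 2) (p₀.1 + ε / 2) ×ˢ Metric.ball p₀.2 (ε / 2) ⊆
        {z : ℝ × En n | dS S z.1 z.2 < ε} := by
      rintro ⟨t, x⟩ ⟨ht, hx⟩
      simp only [mem_Ioo] at ht
      rw [Metric.mem_ball] at hx
      show dS S t x < ε
      refine lt_of_le_of_lt (dS_le_pt hp₀S t x) ((Real.sqrt_lt' hε0).2 ?_)
      have hdn : (0:ℝ) ≤ dist x p₀.2 := dist_nonneg
      nlinarith [ht.1, ht.2]
    calc ENNReal.ofReal ε * volume (Metric.ball p₀.2 (ε / 2))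
        = volume (Ioo (p₀.1 - ε / 2) (p₀.1 + ε / 2) ×ˢ Metric.ball p₀.2 (ε / 2)) := by
          rw [Measure.volume_eq_prod, Measure.prod_prod, Real.volume_Ioo]
          congr 2
          ring
      _ ≤ _ := measure_mono hsub
  -- ball volume
  set Bv := volume (Metric.ball (0 : En n) 1) with hBv
  have hB0 : Bv ≠ 0 := (Metric.measure_ball_pos volume 0 one_pos).ne'
  have hBtop : Bv ≠ ⊤ := measure_ball_lt_top.ne
  have hball : ∀ ε : ℝ, 0 < ε →
      volume (Metric.ball p₀.2 (ε / 2)) = ENNReal.ofReal ((ε / 2) ^ n) * Bv := by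
    intro ε hε0
    rw [hBv, Measure.addHaar_ball volume p₀.2 (by positivity : (0:ℝ) ≤ ε / 2),
      finrank_euclideanSpace_fin]
  set Cb := Bv.toReal / 2 ^ n with hCb
  have hBtpos : 0 < Bv.toReal := ENNReal.toReal_pos hB0 hBtop
  have hCbpos : 0 < Cb := by rw [hCb]; positivity
  -- lower bound on the (real) sausage measure
  have hmR : ∀ ε : ℝ, 0 < ε → ε ≤ 1 →
      ε ^ (n + 1) * Cb ≤ (volume {z : ℝ × En n | dS S z.1 z.2 < ε}).toReal := by
    intro ε hε0 hε1
    have h1 : ENNReal.ofReal ε * (ENNReal.ofReal ((ε / 2) ^ n) * Bv) ≤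
        volume {z : ℝ × En n | dS S z.1 z.2 < ε} := by
      rw [← hball ε hε0]; exact hrect ε hε0
    have h2 := ENNReal.toReal_mono (hfin ε hε0 hε1) h1
    rw [ENNReal.toReal_mul, ENNReal.toReal_mul, ENNReal.toReal_ofReal hε0.le,
      ENNReal.toReal_ofReal (by positivity)] at h2
    calc ε ^ (n + 1) * Cb = ε * ((ε / 2) ^ n * Bv.toReal) := by
          rw [hCb, div_pow]; field_simp; ring
      _ ≤ _ := h2
  have hmpos : ∀ ε : ℝ, 0 < ε → ε ≤ 1 →
      0 < (volume {z : ℝ × En n | dS S z.1 z.2 < ε}).toReal := by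
    intro ε h0 h1
    refine lt_of_lt_of_le ?_ (hmR ε h0 h1)
    positivity
  set f : ℝ → ℝ := fun ε : ℝ =>
    Real.log ((volume {z : ℝ × En n | dS S z.1 z.2 < ε}).toReal) / Real.log ε with hf
  have hbox' : limsup f (𝓝[>] (0:ℝ)) < α := hbox
  -- boundedness of f near 0
  have hbound : ∀ᶠ ε in 𝓝[>] (0:ℝ), f ε ≤ (n + 1 : ℝ) + |Real.log Cb| := by
    have hmem : Ioo (0:ℝ) (Real.exp (-1)) ∈ 𝓝[>] (0:ℝ) :=
      Ioo_mem_nhdsGT_of_mem ⟨le_refl 0, Real.exp_pos _⟩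
    filter_upwards [hmem] with ε hε
    obtain ⟨hε0, hεe⟩ := hε
    have hε1 : ε < 1 := by
      refine hεe.trans_le ?_
      rw [show (1:ℝ) = Real.exp 0 from (Real.exp_zero).symm]
      exact Real.exp_le_exp.2 (by norm_num)
    have hL : Real.log ε ≤ -1 := by
      have h := Real.log_le_log hε0 hεe.le
      rwa [Real.log_exp] at h
    have hLneg : Real.log ε < 0 := lt_of_le_of_lt hL (by norm_num)
    have hmR' := hmR ε hε0 hε1.le
    have hmpos' := hmpos ε hε0 hε1.le
    have hlog : ((n : ℝ) + 1) * Real.log ε + Real.log Cb ≤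
        Real.log ((volume {z : ℝ × En n | dS S z.1 z.2 < ε}).toReal) := by
      have h := Real.log_le_log (by positivity) hmR'
      rw [Real.log_mul (by positivity) hCbpos.ne', Real.log_pow] at h
      calc ((n : ℝ) + 1) * Real.log ε + Real.log Cb
          = ((n + 1 : ℕ) : ℝ) * Real.log ε + Real.log Cb := by push_cast; ring
        _ ≤ _ := h
    show Real.log ((volume {z : ℝ × En n | dS S z.1 z.2 < ε}).toReal) / Real.log ε ≤
      (n + 1 : ℝ) + |Real.log Cb|
    rw [div_le_iff_of_neg hLneg]
    nlinarith [le_abs_self (Real.log Cb), neg_abs_le (Real.log Cb), abs_nonneg (Real.log Cb)]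
  have hbb : IsBoundedUnder (· ≤ ·) (𝓝[>] (0:ℝ)) f :=
    ⟨(n + 1 : ℝ) + |Real.log Cb|, by simpa [eventually_map] using hbound⟩
  set l₀ := limsup f (𝓝[>] (0:ℝ)) with hl₀
  set α' := max ((l₀ + α) / 2) (α / 2) with hα'def
  have hα'pos : 0 < α' := lt_max_of_lt_right (by linarith)
  have hα'lt : α' < α := max_lt (by linarith [hbox']) (by linarith)
  have hl₀α' : l₀ < α' := lt_max_of_lt_left (by linarith [hbox'])
  have hev : ∀ᶠ ε in 𝓝[>] (0:ℝ), f ε < α' := eventually_lt_of_limsup_lt hl₀α' hbb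
  set I := ∫⁻ t in Ioo (0:ℝ) T, ∫⁻ x in Metric.closedBall (0 : En n) Kr, (dSInv S t x) ^ α
    with hI
  have hkey : ∀ᶠ ε in 𝓝[>] (0:ℝ), ENNReal.ofReal (ε ^ (α' - α)) ≤ 3 * I := by
    have hmem : Ioo (0:ℝ) (min T 1) ∈ 𝓝[>] (0:ℝ) :=
      Ioo_mem_nhdsGT_of_mem ⟨le_refl 0, lt_min hT one_pos⟩
    filter_upwards [hev, hmem] with ε hfε hεm
    obtain ⟨hε0, hεlt⟩ := hεm
    have hεT : ε < T := hεlt.trans_le (min_le_left _ _)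
    have hε1 : ε < 1 := hεlt.trans_le (min_le_right _ _)
    have hmRε := hmpos ε hε0 hε1.le
    have hLneg : Real.log ε < 0 := Real.log_neg hε0 hε1
    have hfε' : Real.log ((volume {z : ℝ × En n | dS S z.1 z.2 < ε}).toReal) / Real.log ε
        < α' := hfε
    have hloglt : α' * Real.log ε <
        Real.log ((volume {z : ℝ × En n | dS S z.1 z.2 < ε}).toReal) :=
      (div_lt_iff_of_neg hLneg).1 hfε'
    have hma : ENNReal.ofReal (ε ^ α') ≤ volume {z : ℝ × En n | dS S z.1 z.2 < ε} := by
      have h1 : ε ^ α' ≤ (volume {z : ℝ × En n | dS S z.1 z.2 < ε}).toReal := by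
        rw [Real.rpow_def_of_pos hε0]
        calc Real.exp (Real.log ε * α') = Real.exp (α' * Real.log ε) := by rw [mul_comm]
          _ ≤ Real.exp (Real.log ((volume {z : ℝ × En n | dS S z.1 z.2 < ε}).toReal)) :=
              (Real.exp_le_exp.2 hloglt.le)
          _ = (volume {z : ℝ × En n | dS S z.1 z.2 < ε}).toReal := Real.exp_log hmRε
      calc ENNReal.ofReal (ε ^ α')
          ≤ ENNReal.ofReal ((volume {z : ℝ × En n | dS S z.1 z.2 < ε}).toReal) :=
            ENNReal.ofReal_le_ofReal h1
        _ = volume {z : ℝ × En n | dS S z.1 z.2 < ε} :=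
            ENNReal.ofReal_toReal (hfin ε hε0 hε1.le)
    have hb := reflect_bound hSne' hSsub hε0 hεT
    have hc := integral_lower (α := α) hSne' measurableSet_closedBall (hspace ε hε1.le) hε0 hα
    have hchain : (ENNReal.ofReal ε)⁻¹ ^ α * ENNReal.ofReal (ε ^ α') ≤ 3 * I := by
      calc (ENNReal.ofReal ε)⁻¹ ^ α * ENNReal.ofReal (ε ^ α')
          ≤ (ENNReal.ofReal ε)⁻¹ ^ α * volume {z : ℝ × En n | dS S z.1 z.2 < ε} := by
            exact mul_le_mul_right hma _
        _ ≤ (ENNReal.ofReal ε)⁻¹ ^ α *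
            (3 * volume ({z : ℝ × En n | dS S z.1 z.2 < ε} ∩ Ioo 0 T ×ˢ univ)) :=
            mul_le_mul_right hb _
        _ = 3 * ((ENNReal.ofReal ε)⁻¹ ^ α *
            volume ({z : ℝ × En n | dS S z.1 z.2 < ε} ∩ Ioo 0 T ×ˢ univ)) := by ring
        _ ≤ 3 * I := mul_le_mul_right hc 3
    refine le_trans (le_of_eq ?_) hchain
    have e1 : (ENNReal.ofReal ε)⁻¹ ^ α = ENNReal.ofReal ((ε ^ α)⁻¹) := by
      rw [ENNReal.inv_rpow, ENNReal.ofReal_inv_of_pos (Real.rpow_pos_of_pos hε0 α),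
        ENNReal.ofReal_rpow_of_pos hε0]
    rw [e1, ← ENNReal.ofReal_mul (by positivity)]
    congr 1
    rw [Real.rpow_sub hε0, div_eq_mul_inv, mul_comm]
  have htend : Tendsto (fun ε : ℝ => ENNReal.ofReal (ε ^ (α' - α))) (𝓝[>] (0:ℝ)) (𝓝 ⊤) := by
    have h1 : Tendsto (fun ε : ℝ => (ε⁻¹) ^ (α - α')) (𝓝[>] (0:ℝ)) atTop :=
      (tendsto_rpow_atTop (by linarith)).comp tendsto_inv_nhdsGT_zero
    have heq : (fun ε : ℝ => (ε⁻¹) ^ (α - α')) =ᶠ[𝓝[>] (0:ℝ)]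
        fun ε : ℝ => ε ^ (α' - α) := by
      filter_upwards [self_mem_nhdsWithin] with ε hε
      have hε0 : (0:ℝ) < ε := hε
      rw [Real.inv_rpow hε0.le, ← Real.rpow_neg hε0.le, neg_sub]
    have h2 : Tendsto (fun ε : ℝ => ε ^ (α' - α)) (𝓝[>] (0:ℝ)) atTop := h1.congr' heq
    exact ENNReal.tendsto_ofReal_atTop.comp h2
  have hfinal : (⊤ : ℝ≥0∞) ≤ 3 * I := le_of_tendsto htend hkey
  have h3I : 3 * I = ⊤ := top_le_iff.1 hfinal
  rcases ENNReal.mul_eq_top.1 h3I with ⟨-, hItop⟩ | ⟨h3, -⟩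
  · exact hItop
  · exact absurd h3 (by norm_num)
end

section
/- Let n ≥ 1, T > 0, let 𝒯 ⊆ [0,T] and A ⊆ ℝⁿ be bounded and nonempty, and let α,β ∈ [1,∞). Suppose s ∈ [0,1] and a ∈ [0,n] are such that for every δ > 0 there exists C > 0 with μ₁({t ∈ ℝ : d_𝒯(t) < ε}) ≤ C ε^{1−s−δ} and μₙ({x ∈ ℝⁿ : d_A(x) < ε}) ≤ C ε^{n−a−δ} for all ε ∈ (0,1] (i.e. dim_B 𝒯 ≤ s and dim_B A ≤ a). If at least one of the following holds: (1) α < n − a; (2) β < 1 − s; (3) αβ < α(1−s) + β(n−a); then for every compact K ⊆ ℝⁿ, ∫₀^T (∫_K d_{𝒯×A}(t,x)^{−α} dx)^{β/α} dt < ∞, where d_{𝒯×A}(t,x) is the Euclidean distance in ℝ^{1+n} from (t,x) to 𝒯×A; i.e. (α,β) belongs to the codimension print of 𝒯×A. -/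
open MeasureTheory Set Filter ENNReal

open MeasureTheory Set Filter ENNReal in
private lemma lemA {X : Type*} [MetricSpace X] [MeasureSpace X] [OpensMeasurableSpace X]
    (B : Set X) (K : Set X) (hKm : MeasurableSet K) (hK : volume K ≠ ∞)
    {γ g C : ℝ} (hγ0 : 0 ≤ γ) (hγg : γ < g) (hC : 0 < C)
    (hdim : ∀ ε ∈ Ioc (0:ℝ) 1,
      volume {x : X | Metric.infDist x B < ε} ≤ ENNReal.ofReal (C * ε ^ g)) :
    ∫⁻ x in K, ((ENNReal.ofReal (Metric.infDist x B))⁻¹) ^ γ < ∞ := by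
  have hg0 : 0 < g := lt_of_le_of_lt hγ0 hγg
  set d : X → ℝ := fun x => Metric.infDist x B with hd
  set f : X → ℝ≥0∞ := fun x => ((ENNReal.ofReal (d x))⁻¹) ^ γ with hf
  -- measure of {d = 0} is zero
  have hnull : volume {x : X | d x = 0} = 0 := by
    have hle : ∀ k : ℕ, volume {x : X | d x = 0}
        ≤ ENNReal.ofReal C * (ENNReal.ofReal ((1/2 : ℝ) ^ g)) ^ (k+1) := by
      intro k
      have h1 : ((1/2:ℝ)^(k+1)) ∈ Ioc (0:ℝ) 1 := by
        constructor
        · positivity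
        · exact pow_le_one₀ (by norm_num) (by norm_num)
      have h2 : volume {x : X | d x = 0} ≤ volume {x : X | d x < (1/2:ℝ)^(k+1)} := by
        apply measure_mono; intro x hx
        simp only [mem_setOf_eq] at *
        rw [hx]; exact h1.1
      refine h2.trans ((hdim _ h1).trans_eq ?_)
      rw [ENNReal.ofReal_mul hC.le]
      congr 1
      have : (((1/2:ℝ)^(k+1))^g) = ((1/2:ℝ)^g)^(k+1) := by
        rw [← Real.rpow_natCast ((1/2:ℝ)^g) (k+1), ← Real.rpow_natCast (1/2:ℝ) (k+1),
          ← Real.rpow_mul (by norm_num), ← Real.rpow_mul (by norm_num), mul_comm]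
      rw [this, ← ENNReal.ofReal_pow (by positivity)]
    have htend : Tendsto (fun k : ℕ => ENNReal.ofReal C * (ENNReal.ofReal ((1/2:ℝ)^g)) ^ (k+1))
        atTop (nhds 0) := by
      rw [show (0:ℝ≥0∞) = ENNReal.ofReal C * 0 by simp]
      apply ENNReal.Tendsto.const_mul
      · have hr : ENNReal.ofReal ((1/2:ℝ)^g) < 1 := by
          rw [← ENNReal.ofReal_one]
          exact ENNReal.ofReal_lt_ofReal_iff_of_nonneg (by positivity) |>.mpr
            (Real.rpow_lt_one (by norm_num) (by norm_num) hg0)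
        exact (ENNReal.tendsto_pow_atTop_nhds_zero_of_lt_one hr).comp (tendsto_add_atTop_nat 1)
      · simp
    exact le_antisymm (ge_of_tendsto' htend hle) zero_le
  -- shells
  have h2 : (0:ℝ) < 1/2 := by norm_num
  set S : ℕ → Set X := fun j => {x : X | (1/2:ℝ)^(j+1) ≤ d x ∧ d x < (1/2:ℝ)^j} with hS
  have hSm : ∀ j, MeasurableSet (S j) := by
    intro j
    have hdc : Continuous d := Metric.continuous_infDist_pt B
    exact (measurableSet_le measurable_const hdc.measurable).inter
      (measurableSet_lt hdc.measurable measurable_const)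
  have hcover : K ⊆ {x | d x = 0} ∪ ((K ∩ {x | 1 ≤ d x}) ∪ ⋃ j, (K ∩ S j)) := by
    intro x hx
    rcases eq_or_lt_of_le (Metric.infDist_nonneg : 0 ≤ d x) with h0 | h0
    · exact Or.inl h0.symm
    right
    rcases le_or_gt 1 (d x) with h1 | h1
    · exact Or.inl ⟨hx, h1⟩
    right
    have hex : ∃ k, (1/2:ℝ)^k ≤ d x := by
      obtain ⟨k, hk⟩ := exists_pow_lt_of_lt_one h0 (by norm_num : (1/2:ℝ) < 1)
      exact ⟨k, hk.le⟩
    have hk0 : (1/2:ℝ)^(Nat.find hex) ≤ d x := Nat.find_spec hex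
    have hk0ne : Nat.find hex ≠ 0 := by
      intro h; rw [h, pow_zero] at hk0; linarith
    obtain ⟨j, hj⟩ : ∃ j, Nat.find hex = j + 1 :=
      ⟨Nat.find hex - 1, (Nat.succ_pred_eq_of_pos (Nat.pos_of_ne_zero hk0ne)).symm⟩
    refine mem_iUnion.mpr ⟨j, hx, by rw [← hj]; exact hk0, ?_⟩
    by_contra hle; push_neg at hle
    exact Nat.find_min hex (by omega) hle
  -- piece bounds
  have e0 : ∫⁻ x in {x : X | d x = 0}, f x = 0 := by
    rw [Measure.restrict_eq_zero.mpr hnull, lintegral_zero_measure]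
  have e1 : ∫⁻ x in K ∩ {x : X | 1 ≤ d x}, f x ≤ volume K := by
    have hb : ∀ x ∈ K ∩ {x : X | 1 ≤ d x}, f x ≤ 1 := by
      intro x hx
      refine ENNReal.rpow_le_one ?_ hγ0
      rw [ENNReal.inv_le_one]
      exact ENNReal.one_le_ofReal.mpr hx.2
    have hdc : Continuous d := Metric.continuous_infDist_pt B
    calc ∫⁻ x in K ∩ {x : X | 1 ≤ d x}, f x
        ≤ ∫⁻ _ in K ∩ {x : X | 1 ≤ d x}, 1 :=
          setLIntegral_mono' (hKm.inter (measurableSet_le measurable_const hdc.measurable)) hb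
      _ = volume (K ∩ {x : X | 1 ≤ d x}) := by rw [setLIntegral_one]
      _ ≤ volume K := measure_mono inter_subset_left
  have eS : ∀ j : ℕ, ∫⁻ x in K ∩ S j, f x
      ≤ ENNReal.ofReal ((C * (1/2:ℝ) ^ (-γ)) * ((1/2:ℝ) ^ (g - γ)) ^ j) := by
    intro j
    have hrpos : (0:ℝ) < (1/2:ℝ)^(j+1) := by positivity
    have hb : ∀ x ∈ K ∩ S j, f x ≤ ENNReal.ofReal (((1/2:ℝ)^(j+1)) ^ (-γ)) := by
      intro x hx
      have h1 : (ENNReal.ofReal (d x))⁻¹ ≤ (ENNReal.ofReal ((1/2:ℝ)^(j+1)))⁻¹ :=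
        ENNReal.inv_le_inv' (ENNReal.ofReal_le_ofReal hx.2.1)
      calc f x ≤ ((ENNReal.ofReal ((1/2:ℝ)^(j+1)))⁻¹) ^ γ := ENNReal.rpow_le_rpow h1 hγ0
        _ = ENNReal.ofReal (((1/2:ℝ)^(j+1)) ^ (-γ)) := by
            rw [← ENNReal.ofReal_inv_of_pos hrpos,
              ENNReal.ofReal_rpow_of_pos (inv_pos.mpr hrpos),
              Real.inv_rpow hrpos.le, ← Real.rpow_neg hrpos.le]
    have hmeas : volume (K ∩ S j) ≤ ENNReal.ofReal (C * ((1/2:ℝ)^j) ^ g) := by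
      refine le_trans (measure_mono ?_) (hdim ((1/2:ℝ)^j)
        ⟨by positivity, pow_le_one₀ (by norm_num) (by norm_num)⟩)
      intro x hx; exact hx.2.2
    calc ∫⁻ x in K ∩ S j, f x
        ≤ ∫⁻ _ in K ∩ S j, ENNReal.ofReal (((1/2:ℝ)^(j+1)) ^ (-γ)) :=
          setLIntegral_mono' (hKm.inter (hSm j)) hb
      _ = ENNReal.ofReal (((1/2:ℝ)^(j+1)) ^ (-γ)) * volume (K ∩ S j) := setLIntegral_const _ _
      _ ≤ ENNReal.ofReal (((1/2:ℝ)^(j+1)) ^ (-γ)) * ENNReal.ofReal (C * ((1/2:ℝ)^j) ^ g) :=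
          mul_le_mul_right hmeas _
      _ = ENNReal.ofReal ((((1/2:ℝ)^(j+1)) ^ (-γ)) * (C * ((1/2:ℝ)^j) ^ g)) :=
          (ENNReal.ofReal_mul (by positivity)).symm
      _ = ENNReal.ofReal ((C * (1/2:ℝ) ^ (-γ)) * ((1/2:ℝ) ^ (g - γ)) ^ j) := by
          congr 1
          have eA : ((1/2:ℝ)^(j+1)) ^ (-γ) = (1/2:ℝ) ^ (((j:ℝ)+1) * (-γ)) := by
            rw [← Real.rpow_natCast (1/2:ℝ) (j+1), ← Real.rpow_mul h2.le]
            push_cast; ring_nf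
          have eB : ((1/2:ℝ)^j) ^ g = (1/2:ℝ) ^ ((j:ℝ) * g) := by
            rw [← Real.rpow_natCast (1/2:ℝ) j, ← Real.rpow_mul h2.le]
          have eC : ((1/2:ℝ) ^ (g - γ)) ^ j = (1/2:ℝ) ^ ((g - γ) * (j:ℝ)) := by
            rw [← Real.rpow_natCast ((1/2:ℝ) ^ (g-γ)) j, ← Real.rpow_mul h2.le]
          rw [eA, eB, eC]
          rw [show ((j:ℝ)+1) * (-γ) = -γ + (-γ) * (j:ℝ) by ring]
          rw [Real.rpow_add h2, show (g - γ) * (j:ℝ) = -γ * (j:ℝ) + (j:ℝ) * g by ring,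
            Real.rpow_add h2]
          ring
  -- assemble
  have hmain : ∫⁻ x in K, f x ≤ 0 + (volume K +
      ∑' j : ℕ, ENNReal.ofReal ((C * (1/2:ℝ) ^ (-γ)) * ((1/2:ℝ) ^ (g - γ)) ^ j)) := by
    refine (lintegral_mono_set hcover).trans ?_
    refine (lintegral_union_le _ _ _).trans ?_
    refine add_le_add e0.le ?_
    refine (lintegral_union_le _ _ _).trans ?_
    exact add_le_add e1 ((lintegral_iUnion_le _ _).trans (ENNReal.tsum_le_tsum eS))
  have hr : ENNReal.ofReal ((1/2:ℝ) ^ (g - γ)) < 1 := by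
    rw [← ENNReal.ofReal_one]
    exact (ENNReal.ofReal_lt_ofReal_iff_of_nonneg (by positivity)).mpr
      (Real.rpow_lt_one (by norm_num) (by norm_num) (by linarith))
  have hsum : (∑' j : ℕ, ENNReal.ofReal ((C * (1/2:ℝ) ^ (-γ)) * ((1/2:ℝ) ^ (g - γ)) ^ j)) < ∞ := by
    have hterm : ∀ j : ℕ, ENNReal.ofReal ((C * (1/2:ℝ) ^ (-γ)) * ((1/2:ℝ) ^ (g - γ)) ^ j)
        = ENNReal.ofReal (C * (1/2:ℝ) ^ (-γ)) * (ENNReal.ofReal ((1/2:ℝ) ^ (g - γ))) ^ j := by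
      intro j; rw [ENNReal.ofReal_mul (by positivity), ENNReal.ofReal_pow (by positivity)]
    simp_rw [hterm]
    rw [ENNReal.tsum_mul_left, ENNReal.tsum_geometric]
    exact ENNReal.mul_lt_top ENNReal.ofReal_lt_top (ENNReal.inv_lt_top.mpr (tsub_pos_of_lt hr))
  refine lt_of_le_of_lt hmain ?_
  rw [zero_add]
  exact ENNReal.add_lt_top.mpr ⟨hK.lt_top, hsum⟩

open MeasureTheory Set Filter ENNReal in
private lemma choose_theta {α β a' s' : ℝ} (hα : 1 ≤ α) (hβ : 1 ≤ β)
    (hcase : α < a' ∨ β < s' ∨ α * β < α * s' + β * a') :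
    ∃ θ : ℝ, 0 ≤ θ ∧ θ ≤ 1 ∧ ((1-θ)*α = 0 ∨ (1-θ)*α < a') ∧ (θ*β = 0 ∨ θ*β < s') := by
  have hα0 : (0:ℝ) < α := by linarith
  have hβ0 : (0:ℝ) < β := by linarith
  by_cases h1 : α < a'
  · exact ⟨0, le_refl _, by norm_num, Or.inr (by simpa using h1), Or.inl (by ring)⟩
  by_cases h2 : β < s'
  · exact ⟨1, by norm_num, le_refl _, Or.inl (by ring), Or.inr (by simpa using h2)⟩
  push_neg at h1 h2
  rcases hcase with h | h | h
  · exact absurd h (not_lt.mpr h1)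
  · exact absurd h (not_lt.mpr h2)
  have e : (1:ℝ) - a'/α = (α - a')/α := by rw [sub_div, div_self hα0.ne']
  have hLR : 1 - a'/α < s'/β := by rw [e, div_lt_div_iff₀ hα0 hβ0]; nlinarith
  have hL0 : (0:ℝ) ≤ 1 - a'/α := by
    have : a'/α ≤ 1 := (div_le_one hα0).mpr h1
    linarith
  have hR1 : s'/β ≤ 1 := (div_le_one hβ0).mpr h2
  refine ⟨((1 - a'/α) + s'/β)/2, by linarith, by linarith, Or.inr ?_, Or.inr ?_⟩
  · have h3 : 1 - ((1 - a'/α) + s'/β)/2 < a'/α := by linarith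
    calc (1-((1 - a'/α) + s'/β)/2)*α < (a'/α)*α := mul_lt_mul_of_pos_right h3 hα0
      _ = a' := div_mul_cancel₀ _ hα0.ne'
  · have h3 : ((1 - a'/α) + s'/β)/2 < s'/β := by linarith
    calc ((1 - a'/α) + s'/β)/2*β < (s'/β)*β := mul_lt_mul_of_pos_right h3 hβ0
      _ = s' := div_mul_cancel₀ _ hβ0.ne'

open MeasureTheory Set Filter ENNReal in
private lemma dS_ge_left {n : ℕ} {𝒯 : Set ℝ} {A : Set (En n)} (h𝒯ne : 𝒯.Nonempty)
    (hAne : A.Nonempty) (t : ℝ) (x : En n) :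
    Metric.infDist t 𝒯 ≤ dS (𝒯 ×ˢ A) t x := by
  haveI : Nonempty ↥(𝒯 ×ˢ A) := (h𝒯ne.prod hAne).to_subtype
  refine le_ciInf fun p => ?_
  obtain ⟨hp1, _⟩ := Set.mem_prod.mp p.2
  calc Metric.infDist t 𝒯 ≤ dist t (p : ℝ × En n).1 := Metric.infDist_le_dist_of_mem hp1
    _ = Real.sqrt ((t - (p : ℝ × En n).1)^2) := by rw [Real.dist_eq, Real.sqrt_sq_eq_abs]
    _ ≤ Real.sqrt ((t - (p : ℝ × En n).1)^2 + dist x (p : ℝ × En n).2^2) :=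
        Real.sqrt_le_sqrt (le_add_of_nonneg_right (sq_nonneg _))

open MeasureTheory Set Filter ENNReal in
private lemma dS_ge_right {n : ℕ} {𝒯 : Set ℝ} {A : Set (En n)} (h𝒯ne : 𝒯.Nonempty)
    (hAne : A.Nonempty) (t : ℝ) (x : En n) :
    Metric.infDist x A ≤ dS (𝒯 ×ˢ A) t x := by
  haveI : Nonempty ↥(𝒯 ×ˢ A) := (h𝒯ne.prod hAne).to_subtype
  refine le_ciInf fun p => ?_
  obtain ⟨_, hp2⟩ := Set.mem_prod.mp p.2
  calc Metric.infDist x A ≤ dist x (p : ℝ × En n).2 := Metric.infDist_le_dist_of_mem hp2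
    _ = Real.sqrt (dist x (p : ℝ × En n).2^2) := (Real.sqrt_sq dist_nonneg).symm
    _ ≤ Real.sqrt ((t - (p : ℝ × En n).1)^2 + dist x (p : ℝ × En n).2^2) :=
        Real.sqrt_le_sqrt (le_add_of_nonneg_left (sq_nonneg _))

open MeasureTheory Set Filter ENNReal in
/-- Robinson & Sharples, product sets, inclusion part: sufficient conditions
for `(α,β)` to belong to the codimension print of the product set `𝒯 × A`. -/
theorem print_product_inclusion
    {n : ℕ} (hn : 1 ≤ n) (T : ℝ) (hT : 0 < T)
    (𝒯 : Set ℝ) (h𝒯 : 𝒯 ⊆ Icc (0:ℝ) T) (h𝒯b : Bornology.IsBounded 𝒯) (h𝒯ne : 𝒯.Nonempty)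
    (A : Set (En n)) (hAb : Bornology.IsBounded A) (hAne : A.Nonempty)
    (α β : ℝ) (hα : 1 ≤ α) (hβ : 1 ≤ β)
    (s : ℝ) (hs0 : 0 ≤ s) (hs1 : s ≤ 1)
    (a : ℝ) (ha0 : 0 ≤ a) (han : a ≤ n)
    -- dim_B 𝒯 ≤ s and dim_B A ≤ a, in uniform Minkowski-sausage form
    (h𝒯dim : ∀ δ > (0:ℝ), ∃ C > (0:ℝ), ∀ ε ∈ Ioc (0:ℝ) 1,
      volume {t : ℝ | Metric.infDist t 𝒯 < ε} ≤ ENNReal.ofReal (C * ε ^ (1 - s - δ)))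
    (hAdim : ∀ δ > (0:ℝ), ∃ C > (0:ℝ), ∀ ε ∈ Ioc (0:ℝ) 1,
      volume {x : En n | Metric.infDist x A < ε} ≤ ENNReal.ofReal (C * ε ^ ((n : ℝ) - a - δ)))
    (hcase : α < (n : ℝ) - a ∨ β < 1 - s ∨ α * β < α * (1 - s) + β * ((n : ℝ) - a)) :
    ∀ K : Set (En n), IsCompact K →
      ∫⁻ t in Ioo (0:ℝ) T,
        (∫⁻ x in K, (dSInv (𝒯 ×ˢ A) t x) ^ α) ^ (β / α) < ∞ := by

  intro K hK
  have hαpos : (0:ℝ) < α := by linarith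
  have hβpos : (0:ℝ) < β := by linarith
  obtain ⟨θ, hθ0, hθ1, hAcase, hTcase⟩ :=
    choose_theta (a' := (n:ℝ) - a) (s' := 1 - s) hα hβ hcase
  set u : ℝ → ℝ≥0∞ := fun t => (ENNReal.ofReal (Metric.infDist t 𝒯))⁻¹ with hu
  set v : En n → ℝ≥0∞ := fun x => (ENNReal.ofReal (Metric.infDist x A))⁻¹ with hv
  have humeas : Measurable u :=
    (ENNReal.measurable_ofReal.comp (Metric.continuous_infDist_pt 𝒯).measurable).inv
  have hvmeas : Measurable v :=
    (ENNReal.measurable_ofReal.comp (Metric.continuous_infDist_pt A).measurable).inv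
  have hθα : (0:ℝ) ≤ θ*α := mul_nonneg hθ0 hαpos.le
  have hθα' : (0:ℝ) ≤ (1-θ)*α := mul_nonneg (by linarith) hαpos.le
  have hθβ : (0:ℝ) ≤ θ*β := mul_nonneg hθ0 hβpos.le
  set M : ℝ≥0∞ := ∫⁻ x in K, v x ^ ((1-θ)*α) with hM
  have hMfin : M < ∞ := by
    rcases hAcase with h0 | hlt
    · rw [hM, h0]
      simp only [ENNReal.rpow_zero]
      rw [setLIntegral_one]
      exact hK.measure_lt_top
    · have hδ : (0:ℝ) < ((n:ℝ) - a - (1-θ)*α)/2 := by linarith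
      obtain ⟨C, hC, hdim⟩ := hAdim _ hδ
      refine lemA A K hK.measurableSet hK.measure_lt_top.ne
        (γ := (1-θ)*α) (g := (n:ℝ) - a - ((n:ℝ) - a - (1-θ)*α)/2)
        hθα' (by linarith) hC hdim
  have hUfin : ∫⁻ t in Ioo (0:ℝ) T, u t ^ (θ*β) < ∞ := by
    rcases hTcase with h0 | hlt
    · rw [h0]
      simp only [ENNReal.rpow_zero]
      rw [setLIntegral_one]
      exact measure_Ioo_lt_top
    · have hδ : (0:ℝ) < (1 - s - θ*β)/2 := by linarith
      obtain ⟨C, hC, hdim⟩ := h𝒯dim _ hδ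
      refine lemA 𝒯 (Ioo (0:ℝ) T) measurableSet_Ioo measure_Ioo_lt_top.ne
        (γ := θ*β) (g := 1 - s - (1 - s - θ*β)/2)
        hθβ (by linarith) hC hdim
  have hpt : ∀ t x, dSInv (𝒯 ×ˢ A) t x ^ α ≤ u t ^ (θ*α) * v x ^ ((1-θ)*α) := by
    intro t x
    have h1 : dSInv (𝒯 ×ˢ A) t x ≤ u t :=
      ENNReal.inv_le_inv' (ENNReal.ofReal_le_ofReal (dS_ge_left h𝒯ne hAne t x))
    have h2 : dSInv (𝒯 ×ˢ A) t x ≤ v x :=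
      ENNReal.inv_le_inv' (ENNReal.ofReal_le_ofReal (dS_ge_right h𝒯ne hAne t x))
    calc dSInv (𝒯 ×ˢ A) t x ^ α = dSInv (𝒯 ×ˢ A) t x ^ (θ*α + (1-θ)*α) := by
          congr 1; ring
      _ = dSInv (𝒯 ×ˢ A) t x ^ (θ*α) * dSInv (𝒯 ×ˢ A) t x ^ ((1-θ)*α) :=
          ENNReal.rpow_add_of_nonneg _ _ hθα hθα'
      _ ≤ u t ^ (θ*α) * v x ^ ((1-θ)*α) :=
          mul_le_mul' (ENNReal.rpow_le_rpow h1 hθα) (ENNReal.rpow_le_rpow h2 hθα')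
  have hinner : ∀ t, (∫⁻ x in K, dSInv (𝒯 ×ˢ A) t x ^ α) ≤ u t ^ (θ*α) * M := by
    intro t
    calc ∫⁻ x in K, dSInv (𝒯 ×ˢ A) t x ^ α
        ≤ ∫⁻ x in K, u t ^ (θ*α) * v x ^ ((1-θ)*α) := lintegral_mono fun x => hpt t x
      _ = u t ^ (θ*α) * M := lintegral_const_mul _ (hvmeas.pow_const _)
  have hβα : (0:ℝ) ≤ β/α := by positivity
  calc ∫⁻ t in Ioo (0:ℝ) T, (∫⁻ x in K, dSInv (𝒯 ×ˢ A) t x ^ α) ^ (β/α)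
      ≤ ∫⁻ t in Ioo (0:ℝ) T, u t ^ (θ*β) * M ^ (β/α) := by
        refine lintegral_mono fun t => ?_
        calc (∫⁻ x in K, dSInv (𝒯 ×ˢ A) t x ^ α) ^ (β/α)
            ≤ (u t ^ (θ*α) * M) ^ (β/α) := ENNReal.rpow_le_rpow (hinner t) hβα
          _ = (u t ^ (θ*α)) ^ (β/α) * M ^ (β/α) := ENNReal.mul_rpow_of_nonneg _ _ hβα
          _ = u t ^ (θ*β) * M ^ (β/α) := by
              rw [← ENNReal.rpow_mul,
                show θ*α*(β/α) = θ*β by field_simp [hαpos.ne']]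
    _ = (∫⁻ t in Ioo (0:ℝ) T, u t ^ (θ*β)) * M ^ (β/α) :=
        lintegral_mul_const _ (humeas.pow_const _)
    _ < ∞ := ENNReal.mul_lt_top hUfin (ENNReal.rpow_lt_top_of_nonneg hβα hMfin.ne)
end

section
/- Let n ≥ 1, T > 0, let 𝒯 ⊆ [0,T] and A ⊆ ℝⁿ be bounded and nonempty, and let α,β ∈ [1,∞). Define σ = limsup_{ε→0⁺} log μ₁({t ∈ ℝ : d_𝒯(t) < ε})/log ε and ρ = limsup_{ε→0⁺} log μₙ({x ∈ ℝⁿ : d_A(x) < ε})/log ε (so that, by the Minkowski sausage formulation, σ = 1 − dim_LB 𝒯 and ρ = n − dim_LB A). If αβ > ασ + βρ, then there exists a compact set K ⊆ ℝⁿ with ∫₀^T (∫_K d_{𝒯×A}(t,x)^{−α} dx)^{β/α} dt = ∞; i.e. (α,β) does not belong to the codimension print of 𝒯×A. -/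
open MeasureTheory Set Filter ENNReal

open MeasureTheory Set Filter ENNReal Metric

lemma eventually_sausage_lower {X : Type*} [PseudoMetricSpace X] [MeasureSpace X]
    (S : Set X) (q δ : ℝ) (hδ : 0 < δ)
    (hq : q = limsup (fun ε : ℝ =>
        Real.log ((volume {x : X | infDist x S < ε}).toReal) / Real.log ε)
      (nhdsWithin (0:ℝ) (Ioi 0)))
    (m c : ℝ) (hc : 0 < c)
    (hlow : ∀ᶠ ε in nhdsWithin (0:ℝ) (Ioi 0),
      c * ε ^ m ≤ (volume {x : X | infDist x S < ε}).toReal) :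
    ∀ᶠ ε in nhdsWithin (0:ℝ) (Ioi 0),
      ε ^ (q + δ) ≤ (volume {x : X | infDist x S < ε}).toReal := by
  set ν : ℝ → ℝ := fun ε => (volume {x : X | infDist x S < ε}).toReal with hν
  have hmem : ∀ᶠ ε in nhdsWithin (0:ℝ) (Ioi 0), ε ∈ Ioi (0:ℝ) := self_mem_nhdsWithin
  have hsmall : ∀ᶠ ε in nhdsWithin (0:ℝ) (Ioi 0), ε < min c 1 := by
    filter_upwards [Ioo_mem_nhdsGT_of_mem (⟨le_refl 0, lt_min hc one_pos⟩ :
      (0:ℝ) ∈ Ico (0:ℝ) (min c 1))] with ε hε using hε.2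
  have hbound : ∀ᶠ ε in nhdsWithin (0:ℝ) (Ioi 0),
      Real.log (ν ε) / Real.log ε ≤ m + 1 := by
    filter_upwards [hmem, hsmall, hlow] with ε hε hε1 hl
    have hε0 : (0:ℝ) < ε := hε
    have hεlt1 : ε < 1 := lt_of_lt_of_le hε1 (min_le_right _ _)
    have hεltc : ε < c := lt_of_lt_of_le hε1 (min_le_left _ _)
    have hlogε : Real.log ε < 0 := Real.log_neg hε0 hεlt1
    have hν0 : 0 < ν ε := lt_of_lt_of_le (by positivity) hl
    have h1 : (m + 1) * Real.log ε ≤ Real.log (ν ε) := by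
      have h2 : Real.log (c * ε ^ m) ≤ Real.log (ν ε) :=
        Real.log_le_log (by positivity) hl
      rw [Real.log_mul (ne_of_gt hc) (by positivity), Real.log_rpow hε0] at h2
      have h3 : Real.log ε ≤ Real.log c := Real.log_le_log hε0 hεltc.le
      nlinarith
    exact (div_le_iff_of_neg hlogε).mpr h1
  have hbdd : IsBoundedUnder (· ≤ ·) (nhdsWithin (0:ℝ) (Ioi 0))
      (fun ε => Real.log (ν ε) / Real.log ε) :=
    isBoundedUnder_of_eventually_le hbound
  have hlim : limsup (fun ε => Real.log (ν ε) / Real.log ε)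
      (nhdsWithin (0:ℝ) (Ioi 0)) < q + δ := by
    rw [hν, hq]
    exact lt_add_of_pos_right _ hδ
  have hev := Filter.eventually_lt_of_limsup_lt hlim hbdd
  filter_upwards [hmem, hsmall, hlow, hev] with ε hε hε1 hl hf
  have hε0 : (0:ℝ) < ε := hε
  have hεlt1 : ε < 1 := lt_of_lt_of_le hε1 (min_le_right _ _)
  have hlogε : Real.log ε < 0 := Real.log_neg hε0 hεlt1
  have hν0 : 0 < ν ε := lt_of_lt_of_le (by positivity) hl
  have h1 : (q + δ) * Real.log ε < Real.log (ν ε) := (div_lt_iff_of_neg hlogε).mp hf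
  have h2 : ε ^ (q + δ) = Real.exp (Real.log ε * (q + δ)) := Real.rpow_def_of_pos hε0 _
  rw [h2]
  calc Real.exp (Real.log ε * (q + δ)) ≤ Real.exp (Real.log (ν ε)) := by
        apply Real.exp_le_exp.mpr; linarith [mul_comm (Real.log ε) (q + δ)]
    _ = ν ε := Real.exp_log hν0


set_option maxHeartbeats 2000000 in
open MeasureTheory Set Filter ENNReal in
/-- Robinson & Sharples, product sets, exclusion part: if
`αβ > ασ + βρ`, where `σ = 1 − dim_LB 𝒯` and `ρ = n − dim_LB A` in Minkowski-sausage form,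
then `(α,β)` does not belong to the codimension print of `𝒯 × A`. -/
theorem print_product_exclusion
    {n : ℕ} (hn : 1 ≤ n) (T : ℝ) (hT : 0 < T)
    (𝒯 : Set ℝ) (h𝒯 : 𝒯 ⊆ Icc (0:ℝ) T) (h𝒯b : Bornology.IsBounded 𝒯) (h𝒯ne : 𝒯.Nonempty)
    (A : Set (En n)) (hAb : Bornology.IsBounded A) (hAne : A.Nonempty)
    (α β : ℝ) (hα : 1 ≤ α) (hβ : 1 ≤ β)
    (σ ρ : ℝ)
    (hσ : σ = limsup (fun ε : ℝ =>
        Real.log ((volume {t : ℝ | Metric.infDist t 𝒯 < ε}).toReal) / Real.log ε)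
      (nhdsWithin (0:ℝ) (Ioi 0)))
    (hρ : ρ = limsup (fun ε : ℝ =>
        Real.log ((volume {x : En n | Metric.infDist x A < ε}).toReal) / Real.log ε)
      (nhdsWithin (0:ℝ) (Ioi 0)))
    (hcase : α * β > α * σ + β * ρ) :
    ∃ K : Set (En n), IsCompact K ∧
      ∫⁻ t in Ioo (0:ℝ) T,
        (∫⁻ x in K, (dSInv (𝒯 ×ˢ A) t x) ^ α) ^ (β / α) = ∞ := by
  haveI : Nonempty (Fin n) := Fin.pos_iff_nonempty.mp hn
  obtain ⟨t₀, ht₀⟩ := h𝒯ne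
  obtain ⟨a₀, ha₀⟩ := hAne
  have hα0 : (0:ℝ) < α := lt_of_lt_of_le one_pos hα
  have hβ0 : (0:ℝ) < β := lt_of_lt_of_le one_pos hβ
  have hβα : (0:ℝ) < β / α := div_pos hβ0 hα0
  set N : ℝ := β - σ - ρ * (β / α) with hNdef
  have hN0 : 0 < N := by
    rw [hNdef]
    have h1 : α * (β - σ - ρ * (β / α)) = α * β - α * σ - β * ρ := by
      field_simp
    nlinarith
  set δ : ℝ := N / (2 * (2 + β / α)) with hδdef
  clear_value N
  have hδ0 : 0 < δ := by
    rw [hδdef]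
    exact div_pos hN0 (by positivity)
  clear_value δ
  set e : ℝ := σ + 2 * δ + (ρ + δ) * (β / α) - β with hedef
  clear_value e
  have hden : (2:ℝ) + β / α ≠ 0 := by positivity
  have hδprod : δ * (2 + β / α) = N / 2 := by
    rw [hδdef]
    field_simp
  have hee : e = -(N / 2) := by
    have h1 : e = δ * (2 + β / α) - N := by rw [hedef, hNdef]; ring
    rw [h1, hδprod]; ring
  have he0 : e < 0 := by rw [hee]; linarith
  obtain ⟨r, hrA⟩ := hAb.subset_closedBall 0
  set K : Set (En n) := Metric.closedBall (0 : En n) (|r| + 2) with hKdef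
  have hKc : IsCompact K := isCompact_closedBall _ _
  refine ⟨K, hKc, ?_⟩
  -- eventual lower bound for the 𝒯 sausage
  have hmem : ∀ᶠ ε in nhdsWithin (0:ℝ) (Ioi 0), ε ∈ Ioi (0:ℝ) := self_mem_nhdsWithin
  have hsmall : ∀ᶠ ε in nhdsWithin (0:ℝ) (Ioi 0), ε < min 1 T := by
    filter_upwards [Ioo_mem_nhdsGT_of_mem (⟨le_refl 0, lt_min one_pos hT⟩ :
      (0:ℝ) ∈ Ico (0:ℝ) (min 1 T))] with ε hε using hε.2
  have h𝒯subI : ∀ ε : ℝ, 0 < ε → ε ≤ 1 →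
      {t : ℝ | infDist t 𝒯 < ε} ⊆ Ioo (-1) (T + 1) := by
    intro ε hε0 hε1 t ht
    obtain ⟨t', ht', hd⟩ := (infDist_lt_iff ⟨t₀, ht₀⟩).mp ht
    obtain ⟨ht'0, ht'T⟩ := h𝒯 ht'
    rw [Real.dist_eq] at hd
    have := abs_lt.mp hd
    constructor <;> [linarith [this.1]; linarith [this.2]]
  have h𝒯fin : ∀ ε : ℝ, 0 < ε → ε ≤ 1 → volume {t : ℝ | infDist t 𝒯 < ε} ≠ ⊤ := by
    intro ε hε0 hε1
    exact ne_of_lt (lt_of_le_of_lt (measure_mono (h𝒯subI ε hε0 hε1))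
      (by rw [Real.volume_Ioo]; exact ofReal_lt_top))
  have hlow𝒯 : ∀ᶠ ε in nhdsWithin (0:ℝ) (Ioi 0),
      (1:ℝ) * ε ^ (1:ℝ) ≤ (volume {t : ℝ | infDist t 𝒯 < ε}).toReal := by
    filter_upwards [hmem, hsmall] with ε hε0' hεs
    have hε0 : (0:ℝ) < ε := hε0'
    have hε1 : ε < 1 := lt_of_lt_of_le hεs (min_le_left _ _)
    have hball : Metric.ball t₀ ε ⊆ {t : ℝ | infDist t 𝒯 < ε} := by
      intro y hy
      exact lt_of_le_of_lt (infDist_le_dist_of_mem ht₀) hy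
    have h1 : ENNReal.ofReal (2 * ε) ≤ volume {t : ℝ | infDist t 𝒯 < ε} := by
      rw [← Real.volume_ball]
      exact measure_mono hball
    have h2 := (ofReal_le_iff_le_toReal (h𝒯fin ε hε0 hε1.le)).mp h1
    rw [Real.rpow_one, one_mul]
    linarith
  -- eventual lower bound for the A sausage
  have hAsubK : ∀ ε : ℝ, 0 < ε → ε ≤ 1 → {x : En n | infDist x A < ε} ⊆ K := by
    intro ε hε0 hε1 x hx
    obtain ⟨a, haA, hd⟩ := (infDist_lt_iff ⟨a₀, ha₀⟩).mp hx
    have h1 : dist a (0 : En n) ≤ r := hrA haA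
    have h2 : dist x (0 : En n) ≤ dist x a + dist a 0 := dist_triangle _ _ _
    have : dist x (0 : En n) ≤ |r| + 2 := by
      have := le_abs_self r
      linarith
    exact this
  have hAfin : ∀ ε : ℝ, 0 < ε → ε ≤ 1 → volume {x : En n | infDist x A < ε} ≠ ⊤ := by
    intro ε hε0 hε1
    exact ne_of_lt (lt_of_le_of_lt (measure_mono (hAsubK ε hε0 hε1)) hKc.measure_lt_top)
  have hcA : (0:ℝ) < (volume (Metric.ball (0 : En n) 1)).toReal :=
    ENNReal.toReal_pos (measure_ball_pos volume _ one_pos).ne' measure_ball_lt_top.ne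
  have hlowA : ∀ᶠ ε in nhdsWithin (0:ℝ) (Ioi 0),
      (volume (Metric.ball (0 : En n) 1)).toReal * ε ^ (n:ℝ)
        ≤ (volume {x : En n | infDist x A < ε}).toReal := by
    filter_upwards [hmem, hsmall] with ε hε0' hεs
    have hε0 : (0:ℝ) < ε := hε0'
    have hε1 : ε < 1 := lt_of_lt_of_le hεs (min_le_left _ _)
    have hball : Metric.ball a₀ ε ⊆ {x : En n | infDist x A < ε} := by
      intro y hy
      exact lt_of_le_of_lt (infDist_le_dist_of_mem ha₀) hy
    have h1 : volume (Metric.ball a₀ ε) = ENNReal.ofReal (ε ^ n) * volume (Metric.ball (0 : En n) 1) := by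
      rw [Measure.addHaar_ball volume a₀ hε0.le]
      congr 2
      simp
    have h2 : (volume (Metric.ball a₀ ε)).toReal ≤ (volume {x : En n | infDist x A < ε}).toReal :=
      ENNReal.toReal_mono (hAfin ε hε0 hε1.le) (measure_mono hball)
    rw [h1, ENNReal.toReal_mul, ENNReal.toReal_ofReal (by positivity)] at h2
    rw [Real.rpow_natCast]
    linarith
  have h𝒯ev := eventually_sausage_lower 𝒯 σ δ hδ0 hσ 1 1 one_pos hlow𝒯
  have hAev := eventually_sausage_lower A ρ δ hδ0 hρ (n:ℝ) _ hcA hlowA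
  -- the main per-ε lower bound
  have main : ∀ ε : ℝ, 0 < ε → ε < 1 → ε ≤ T →
      ε ^ (σ + δ) ≤ (volume {t : ℝ | infDist t 𝒯 < ε}).toReal →
      ε ^ (ρ + δ) ≤ (volume {x : En n | infDist x A < ε}).toReal →
      ENNReal.ofReal ((ε ^ (σ + 2*δ) * (ε ^ ((ρ + δ) * (β / α)) * ((2*ε) ^ β)⁻¹)) / 4)
        ≤ ∫⁻ t in Ioo (0:ℝ) T, (∫⁻ x in K, (dSInv (𝒯 ×ˢ A) t x) ^ α) ^ (β / α) := by
    intro ε hε0 hε1 hεT h𝒯low hAlow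
    have h2ε0 : (0:ℝ) < 2 * ε := by linarith
    set Aε : Set (En n) := {x : En n | infDist x A < ε} with hAεdef
    set Tε : Set ℝ := {t : ℝ | infDist t 𝒯 < ε} with hTεdef
    have hAεK : Aε ⊆ K := hAsubK ε hε0 hε1.le
    have hAεfin : volume Aε ≠ ⊤ := hAfin ε hε0 hε1.le
    -- inner spatial bound
    have hinner : ∀ t : ℝ, infDist t 𝒯 < ε →
        (ENNReal.ofReal ((2*ε) ^ β))⁻¹ * ENNReal.ofReal (ε ^ ((ρ + δ) * (β / α)))
          ≤ (∫⁻ x in K, (dSInv (𝒯 ×ˢ A) t x) ^ α) ^ (β / α) := by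
      intro t ht
      have hDS : ∀ x ∈ Aε, dS (𝒯 ×ˢ A) t x ≤ 2 * ε := by
        intro x hx
        obtain ⟨t', ht'𝒯, hdt⟩ := (infDist_lt_iff ⟨t₀, ht₀⟩).mp ht
        obtain ⟨a, haA, hda⟩ := (infDist_lt_iff ⟨a₀, ha₀⟩).mp hx
        have hmemp : ((t', a) : ℝ × En n) ∈ 𝒯 ×ˢ A := ⟨ht'𝒯, haA⟩
        have hb : BddBelow (Set.range (fun p : (𝒯 ×ˢ A : Set (ℝ × En n)) =>
            Real.sqrt ((t - (p : ℝ × En n).1) ^ 2 + dist x (p : ℝ × En n).2 ^ 2))) := by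
          refine ⟨0, ?_⟩
          rintro y ⟨p, rfl⟩
          exact Real.sqrt_nonneg _
        have h1 : dS (𝒯 ×ˢ A) t x ≤ Real.sqrt ((t - t') ^ 2 + dist x a ^ 2) :=
          ciInf_le hb (⟨(t', a), hmemp⟩ : (𝒯 ×ˢ A : Set (ℝ × En n)))
        have h2 : Real.sqrt ((t - t') ^ 2 + dist x a ^ 2) ≤ 2 * ε := by
          have h3 : |t - t'| < ε := by rw [← Real.dist_eq]; exact hdt
          have h4 : (t - t') ^ 2 + dist x a ^ 2 ≤ (2 * ε) ^ 2 := by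
            have h5 := dist_nonneg (x := x) (y := a)
            have h6 := abs_nonneg (t - t')
            nlinarith [sq_abs (t - t')]
          calc Real.sqrt ((t - t') ^ 2 + dist x a ^ 2) ≤ Real.sqrt ((2 * ε) ^ 2) :=
                Real.sqrt_le_sqrt h4
            _ = 2 * ε := Real.sqrt_sq h2ε0.le
        linarith
      have hpt : ∀ x ∈ Aε,
          (ENNReal.ofReal ((2*ε) ^ α))⁻¹ ≤ (dSInv (𝒯 ×ˢ A) t x) ^ α := by
        intro x hx
        have h1 : (ENNReal.ofReal (2*ε))⁻¹ ≤ dSInv (𝒯 ×ˢ A) t x := by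
          simp only [dSInv]
          exact ENNReal.inv_le_inv.mpr (ofReal_le_ofReal (hDS x hx))
        calc (ENNReal.ofReal ((2*ε) ^ α))⁻¹ = ((ENNReal.ofReal (2*ε)) ^ α)⁻¹ := by
              rw [ENNReal.ofReal_rpow_of_pos h2ε0]
          _ = ((ENNReal.ofReal (2*ε))⁻¹) ^ α := (ENNReal.inv_rpow _ _).symm
          _ ≤ (dSInv (𝒯 ×ˢ A) t x) ^ α := ENNReal.rpow_le_rpow h1 hα0.le
      have hAεmeas : MeasurableSet Aε :=
        (isOpen_lt (continuous_infDist_pt A) continuous_const).measurableSet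
      have h1 : (ENNReal.ofReal ((2*ε) ^ α))⁻¹ * volume Aε
          ≤ ∫⁻ x in K, (dSInv (𝒯 ×ˢ A) t x) ^ α := by
        calc (ENNReal.ofReal ((2*ε) ^ α))⁻¹ * volume Aε
            = ∫⁻ _x in Aε, (ENNReal.ofReal ((2*ε) ^ α))⁻¹ := (setLIntegral_const _ _).symm
          _ ≤ ∫⁻ x in Aε, (dSInv (𝒯 ×ˢ A) t x) ^ α := setLIntegral_mono' hAεmeas hpt
          _ ≤ ∫⁻ x in K, (dSInv (𝒯 ×ˢ A) t x) ^ α :=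
              lintegral_mono' (Measure.restrict_mono hAεK le_rfl) le_rfl
      have h2 : ((ENNReal.ofReal ((2*ε) ^ α))⁻¹ * volume Aε) ^ (β / α)
          ≤ (∫⁻ x in K, (dSInv (𝒯 ×ˢ A) t x) ^ α) ^ (β / α) :=
        ENNReal.rpow_le_rpow h1 hβα.le
      refine le_trans ?_ h2
      rw [ENNReal.mul_rpow_of_nonneg _ _ hβα.le, ENNReal.inv_rpow,
        ENNReal.ofReal_rpow_of_pos (by positivity), ← Real.rpow_mul h2ε0.le]
      have hαβα : α * (β / α) = β := by field_simp
      rw [hαβα]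
      apply mul_le_mul_right
      have h3 : ENNReal.ofReal (ε ^ (ρ + δ)) ≤ volume Aε :=
        (ofReal_le_iff_le_toReal hAεfin).mpr hAlow
      calc ENNReal.ofReal (ε ^ ((ρ + δ) * (β / α)))
          = (ENNReal.ofReal (ε ^ (ρ + δ))) ^ (β / α) := by
            rw [ENNReal.ofReal_rpow_of_pos (by positivity), ← Real.rpow_mul hε0.le]
        _ ≤ (volume Aε) ^ (β / α) := ENNReal.rpow_le_rpow h3 hβα.le
    -- temporal part
    set W : Set ℝ := Tε ∩ Ioo (0:ℝ) T with hWdef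
    have hWmeas : MeasurableSet W :=
      ((isOpen_lt (continuous_infDist_pt 𝒯) continuous_const).inter isOpen_Ioo).measurableSet
    have hWfin : volume W ≠ ⊤ := by
      refine ne_of_lt (lt_of_le_of_lt (measure_mono inter_subset_right) ?_)
      rw [Real.volume_Ioo]; exact ofReal_lt_top
    have hTεfin : volume Tε ≠ ⊤ := h𝒯fin ε hε0 hε1.le
    have hWlow : ENNReal.ofReal (ε ^ (σ + 2*δ) / 4) ≤ volume W := by
      have h0T : (0:ℝ) ≤ t₀ ∧ t₀ ≤ T := h𝒯 ht₀
      -- interval lower bound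
      have hJ : Ioo (max (t₀ - ε) 0) (min (t₀ + ε) T) ⊆ W := by
        intro t htJ
        obtain ⟨hJ1, hJ2⟩ := htJ
        have h1 : t₀ - ε < t := lt_of_le_of_lt (le_max_left _ _) hJ1
        have h2 : t < t₀ + ε := lt_of_lt_of_le hJ2 (min_le_left _ _)
        have h3 : (0:ℝ) < t := lt_of_le_of_lt (le_max_right _ _) hJ1
        have h4 : t < T := lt_of_lt_of_le hJ2 (min_le_right _ _)
        refine ⟨?_, h3, h4⟩
        have : dist t t₀ < ε := by rw [Real.dist_eq]; rw [abs_lt]; constructor <;> linarith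
        exact lt_of_le_of_lt (infDist_le_dist_of_mem ht₀) this
      have hJvol : ENNReal.ofReal ε ≤ volume W := by
        refine le_trans ?_ (measure_mono hJ)
        rw [Real.volume_Ioo]
        apply ofReal_le_ofReal
        rcases le_total (t₀ + ε) T with h | h <;> rcases le_total (t₀ - ε) 0 with h' | h' <;>
          simp [min_eq_left, min_eq_right, max_eq_left, max_eq_right, h, h'] <;> linarith
      have hεW : ε ≤ (volume W).toReal := (ofReal_le_iff_le_toReal hWfin).mp hJvol
      -- sausage splitting bound
      have hsplit : Tε ⊆ W ∪ (Ioc (-ε) 0 ∪ Ico T (T + ε)) := by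
        intro t ht
        have hI : t ∈ Ioo (-ε) (T + ε) := by
          obtain ⟨t', ht', hd⟩ := (infDist_lt_iff ⟨t₀, ht₀⟩).mp ht
          obtain ⟨ht'0, ht'T⟩ := h𝒯 ht'
          rw [Real.dist_eq] at hd
          have := abs_lt.mp hd
          constructor <;> [linarith [this.1]; linarith [this.2]]
        rcases le_or_gt t 0 with h | h
        · exact Or.inr (Or.inl ⟨hI.1, h⟩)
        rcases le_or_gt T t with h' | h'
        · exact Or.inr (Or.inr ⟨h', hI.2⟩)
        · exact Or.inl ⟨ht, h, h'⟩
      have hμ : volume Tε ≤ volume W + (ENNReal.ofReal ε + ENNReal.ofReal ε) := by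
        refine (measure_mono hsplit).trans ((measure_union_le _ _).trans ?_)
        refine add_le_add_right ((measure_union_le _ _).trans ?_) _
        rw [Real.volume_Ioc, Real.volume_Ico]
        apply add_le_add <;> apply ofReal_le_ofReal <;> linarith
      have hμ' : (volume Tε).toReal ≤ (volume W).toReal + (ε + ε) := by
        have hfin2 : volume W + (ENNReal.ofReal ε + ENNReal.ofReal ε) ≠ ⊤ := by
          simp [hWfin]
        have := ENNReal.toReal_mono hfin2 hμ
        rw [ENNReal.toReal_add hWfin (by simp), ENNReal.toReal_add ofReal_ne_top ofReal_ne_top,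
          ENNReal.toReal_ofReal hε0.le] at this
        linarith
      have hεσ2 : ε ^ (σ + 2*δ) ≤ ε ^ (σ + δ) :=
        Real.rpow_le_rpow_of_exponent_ge hε0 hε1.le (by linarith)
      have hεσ2nn : (0:ℝ) ≤ ε ^ (σ + 2*δ) := Real.rpow_nonneg hε0.le _
      have hkey : ε ^ (σ + 2*δ) / 4 ≤ (volume W).toReal := by
        rcases le_or_gt (4 * ε) (ε ^ (σ + δ)) with h4 | h4
        · nlinarith [h𝒯low, hμ']
        · nlinarith
      exact (ofReal_le_iff_le_toReal hWfin).mpr hkey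
    calc ENNReal.ofReal ((ε ^ (σ + 2*δ) * (ε ^ ((ρ + δ) * (β / α)) * ((2*ε) ^ β)⁻¹)) / 4)
        = ((ENNReal.ofReal ((2*ε) ^ β))⁻¹ * ENNReal.ofReal (ε ^ ((ρ + δ) * (β / α))))
            * ENNReal.ofReal (ε ^ (σ + 2*δ) / 4) := by
          rw [← ENNReal.ofReal_inv_of_pos (Real.rpow_pos_of_pos h2ε0 β),
            ← ENNReal.ofReal_mul (by positivity), ← ENNReal.ofReal_mul (by positivity)]
          exact congrArg ENNReal.ofReal (by ring)
      _ ≤ ((ENNReal.ofReal ((2*ε) ^ β))⁻¹ * ENNReal.ofReal (ε ^ ((ρ + δ) * (β / α))))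
            * volume W := mul_le_mul_right hWlow _
      _ = ∫⁻ _t in W, ((ENNReal.ofReal ((2*ε) ^ β))⁻¹
            * ENNReal.ofReal (ε ^ ((ρ + δ) * (β / α)))) := (setLIntegral_const _ _).symm
      _ ≤ ∫⁻ t in W, (∫⁻ x in K, (dSInv (𝒯 ×ˢ A) t x) ^ α) ^ (β / α) :=
          setLIntegral_mono' hWmeas (fun t htW => hinner t htW.1)
      _ ≤ ∫⁻ t in Ioo (0:ℝ) T, (∫⁻ x in K, (dSInv (𝒯 ×ˢ A) t x) ^ α) ^ (β / α) :=
          lintegral_mono' (Measure.restrict_mono inter_subset_right le_rfl) le_rfl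
  -- conclude by divergence
  by_contra hI
  set I : ℝ≥0∞ := ∫⁻ t in Ioo (0:ℝ) T, (∫⁻ x in K, (dSInv (𝒯 ×ˢ A) t x) ^ α) ^ (β / α) with hIdef
  have hIfin : I ≠ ⊤ := hI
  have hev : ∀ᶠ ε in nhdsWithin (0:ℝ) (Ioi 0),
      (ε ^ (σ + 2*δ) * (ε ^ ((ρ + δ) * (β / α)) * ((2*ε) ^ β)⁻¹)) / 4 ≤ I.toReal := by
    filter_upwards [hmem, hsmall, h𝒯ev, hAev] with ε hε0' hεs h𝒯e hAe
    have hε0 : (0:ℝ) < ε := hε0'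
    have hε1 : ε < 1 := lt_of_lt_of_le hεs (min_le_left _ _)
    have hεT : ε ≤ T := le_of_lt (lt_of_lt_of_le hεs (min_le_right _ _))
    exact (ofReal_le_iff_le_toReal hIfin).mp (main ε hε0 hε1 hεT h𝒯e hAe)
  have htends : Tendsto (fun ε : ℝ =>
      (ε ^ (σ + 2*δ) * (ε ^ ((ρ + δ) * (β / α)) * ((2*ε) ^ β)⁻¹)) / 4)
      (nhdsWithin (0:ℝ) (Ioi 0)) atTop := by
    have hne : (0:ℝ) < -e := by linarith
    have h1 : Tendsto (fun ε : ℝ => (ε⁻¹) ^ (-e)) (nhdsWithin (0:ℝ) (Ioi 0)) atTop :=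
      (tendsto_rpow_atTop hne).comp tendsto_inv_nhdsGT_zero
    have h2 : Tendsto (fun ε : ℝ => ε ^ e) (nhdsWithin (0:ℝ) (Ioi 0)) atTop := by
      refine h1.congr' ?_
      filter_upwards [hmem] with ε hε
      have hε0 : (0:ℝ) < ε := hε
      rw [Real.rpow_neg (inv_nonneg.mpr hε0.le), Real.inv_rpow hε0.le, inv_inv]
    have h3 : Tendsto (fun ε : ℝ => (((2:ℝ) ^ β)⁻¹ / 4) * ε ^ e)
        (nhdsWithin (0:ℝ) (Ioi 0)) atTop :=
      h2.const_mul_atTop (by positivity)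
    refine h3.congr' ?_
    filter_upwards [hmem] with ε hε
    have hε0 : (0:ℝ) < ε := hε
    have h2β : ((2:ℝ) * ε) ^ β = 2 ^ β * ε ^ β := Real.mul_rpow (by norm_num) hε0.le
    have hεe : ε ^ (σ + 2*δ) * (ε ^ ((ρ + δ) * (β / α)) * (ε ^ β)⁻¹) = ε ^ e := by
      rw [← Real.rpow_neg hε0.le, ← Real.rpow_add hε0, ← Real.rpow_add hε0, hedef]
      congr 1
      ring
    rw [h2β, ← hεe]
    have h2βne : ((2:ℝ) ^ β) ≠ 0 := ne_of_gt (Real.rpow_pos_of_pos (by norm_num) _)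
    have hεβne : (ε ^ β) ≠ 0 := ne_of_gt (Real.rpow_pos_of_pos hε0 _)
    field_simp
  have hcontr := (htends.eventually_gt_atTop I.toReal).and hev
  obtain ⟨ε, h1, h2⟩ := hcontr.exists
  linarith
end

section
/- Let n ≥ 1, T > 0, let S ⊆ [0,T]×ℝⁿ be bounded and nonempty, and let P_t(S) = {t ∈ [0,T] : (t,x) ∈ S for some x} and P_x(S) = {x ∈ ℝⁿ : (t,x) ∈ S for some t} be its temporal and spatial projections. Let α,β ∈ [1,∞) and suppose s ∈ [0,1] and a ∈ [0,n] are such that for every δ > 0 there exists C > 0 with μ₁({t ∈ ℝ : d_{P_t(S)}(t) < ε}) ≤ C ε^{1−s−δ} and μₙ({x ∈ ℝⁿ : d_{P_x(S)}(x) < ε}) ≤ C ε^{n−a−δ} for all ε ∈ (0,1] (i.e. dim_B P_t(S) ≤ s and dim_B P_x(S) ≤ a). If at least one of the following holds: (1) α < n − a; (2) β < 1 − s; (3) αβ < α(1−s) + β(n−a); then for every compact K ⊆ ℝⁿ, ∫₀^T (∫_K d_S(t,x)^{−α} dx)^{β/α} dt < ∞; i.e. (α,β) belongs to the codimension print of S.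 -/
open MeasureTheory Set Filter ENNReal

open MeasureTheory Set Filter ENNReal in
lemma aux_finite {X : Type*} [MeasurableSpace X] (μ : Measure X) (hμ : μ Set.univ < ∞)
    (h : X → ℝ) (hm : Measurable h)
    (C κ : ℝ) (hC : 0 ≤ C)
    (hbound : ∀ ε ∈ Set.Ioc (0:ℝ) 1, μ {x | h x < ε} ≤ ENNReal.ofReal (C * ε ^ κ))
    (e : ℝ) (he : 0 ≤ e) (heκ : e < κ) :
    ∫⁻ x, ((ENNReal.ofReal (h x))⁻¹) ^ e ∂μ < ∞ := by
  classical
  have h2 : (0:ℝ) < 2 := two_pos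
  have hκ0 : 0 < κ := lt_of_le_of_lt he heκ
  set f : X → ℝ≥0∞ := fun x => ((ENNReal.ofReal (h x))⁻¹) ^ e with hf
  set g : ℕ → ℝ := fun k => (2:ℝ)⁻¹ ^ k with hg
  have hg_pos : ∀ k, 0 < g k := fun k => pow_pos (by norm_num) k
  have hg_le_one : ∀ k, g k ≤ 1 := fun k => pow_le_one₀ (by norm_num) (by norm_num)
  have hg_mem : ∀ k, g k ∈ Set.Ioc (0:ℝ) 1 := fun k => ⟨hg_pos k, hg_le_one k⟩
  have hgr : ∀ m : ℕ, g m = (2:ℝ) ^ (-(m:ℝ)) := by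
    intro m
    show (2:ℝ)⁻¹ ^ m = _
    rw [← Real.rpow_natCast (2:ℝ)⁻¹ m, Real.inv_rpow h2.le, ← Real.rpow_neg h2.le]
  have hg_tend : Tendsto g atTop (nhds 0) :=
    tendsto_pow_atTop_nhds_zero_of_lt_one (by norm_num) (by norm_num)
  set Z : Set X := {x | h x ≤ 0} with hZ
  set A : ℕ → Set X := fun k => {x | g (k+1) ≤ h x ∧ h x < g k} with hA
  -- μ Z = 0
  have hZ0 : μ Z = 0 := by
    have hle : ∀ k : ℕ, μ Z ≤ ENNReal.ofReal (C * g k ^ κ) := by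
      intro k
      refine le_trans (measure_mono ?_) (hbound (g k) (hg_mem k))
      intro x hx
      exact lt_of_le_of_lt hx (hg_pos k)
    have h1 : Tendsto (fun k : ℕ => g k ^ κ) atTop (nhds 0) := by
      have heq : ∀ k : ℕ, g k ^ κ = ((2:ℝ) ^ (-κ)) ^ k := by
        intro k
        rw [hgr k, ← Real.rpow_natCast ((2:ℝ) ^ (-κ)) k, ← Real.rpow_mul h2.le,
          ← Real.rpow_mul h2.le]
        ring_nf
      rw [funext heq]
      exact tendsto_pow_atTop_nhds_zero_of_lt_one
        (Real.rpow_nonneg h2.le _)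
        (Real.rpow_lt_one_of_one_lt_of_neg (by norm_num) (by linarith))
    have h2' : Tendsto (fun k : ℕ => C * g k ^ κ) atTop (nhds 0) := by
      simpa using h1.const_mul C
    have htend : Tendsto (fun k : ℕ => ENNReal.ofReal (C * g k ^ κ)) atTop (nhds 0) := by
      simpa [Function.comp_def] using (ENNReal.continuous_ofReal.tendsto 0).comp h2'
    exact le_antisymm (ge_of_tendsto htend (Filter.Eventually.of_forall hle)) zero_le
  -- cover
  have hcover : {x | h x < 1} ⊆ Z ∪ ⋃ k, A k := by
    intro x hx
    rcases le_or_gt (h x) 0 with h0 | h0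
    · exact Or.inl h0
    · right
      have hex : ∃ m : ℕ, g m ≤ h x := by
        obtain ⟨m, hm⟩ := (hg_tend.eventually_lt_const h0).exists
        exact ⟨m, hm.le⟩
      have hne : Nat.find hex ≠ 0 := by
        intro h0'
        have hsp := Nat.find_spec hex
        rw [h0'] at hsp
        simp only [hg, pow_zero] at hsp
        exact absurd hx (by simp; linarith)
      obtain ⟨k, hk⟩ := Nat.exists_eq_succ_of_ne_zero hne
      refine mem_iUnion.mpr ⟨k, ?_, ?_⟩
      · have hsp := Nat.find_spec hex
        rw [hk] at hsp
        exact hsp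
      · have := Nat.find_min hex (by omega : k < Nat.find hex)
        exact lt_of_not_ge this
  have hB : MeasurableSet {x | (1:ℝ) ≤ h x} := measurableSet_le measurable_const hm
  -- piece 1
  have hpiece1 : ∫⁻ x in {x | (1:ℝ) ≤ h x}, f x ∂μ ≤ μ Set.univ := by
    calc ∫⁻ x in {x | (1:ℝ) ≤ h x}, f x ∂μ
        ≤ ∫⁻ _ in {x | (1:ℝ) ≤ h x}, (1:ℝ≥0∞) ∂μ := by
          refine setLIntegral_mono' hB ?_
          intro x hx
          have h1 : (1:ℝ≥0∞) ≤ ENNReal.ofReal (h x) := ENNReal.one_le_ofReal.mpr hx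
          exact ENNReal.rpow_le_one (ENNReal.inv_le_one.mpr h1) he
      _ = μ {x | (1:ℝ) ≤ h x} := by rw [setLIntegral_const, one_mul]
      _ ≤ μ Set.univ := measure_mono (subset_univ _)
  -- terms
  set D : ℝ≥0∞ := ENNReal.ofReal (C * 2 ^ e) with hD
  set w : ℝ≥0∞ := ENNReal.ofReal ((2:ℝ) ^ (e - κ)) with hw
  have hterm : ∀ k : ℕ, ∫⁻ x in A k, f x ∂μ ≤ D * w ^ k := by
    intro k
    have hAmeas : MeasurableSet (A k) :=
      (measurableSet_le measurable_const hm).inter (measurableSet_lt hm measurable_const)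
    have hfx : ∀ x ∈ A k, f x ≤ ENNReal.ofReal ((g (k+1))⁻¹) ^ e := by
      intro x hx
      have h1 : ENNReal.ofReal (g (k+1)) ≤ ENNReal.ofReal (h x) :=
        ENNReal.ofReal_le_ofReal hx.1
      have h2' : (ENNReal.ofReal (h x))⁻¹ ≤ (ENNReal.ofReal (g (k+1)))⁻¹ :=
        ENNReal.inv_le_inv.mpr h1
      rw [ENNReal.ofReal_inv_of_pos (hg_pos (k+1))]
      exact ENNReal.rpow_le_rpow h2' he
    have hkey : (g (k+1))⁻¹ ^ e * (C * g k ^ κ) = C * 2 ^ e * ((2:ℝ) ^ (e - κ)) ^ k := by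
      have e1 : (g (k+1))⁻¹ ^ e = (2:ℝ) ^ (((k:ℝ)+1) * e) := by
        rw [hgr (k+1), ← Real.rpow_neg h2.le, Real.rpow_mul h2.le]
        push_cast
        ring_nf
      have e2 : g k ^ κ = (2:ℝ) ^ (-(k:ℝ) * κ) := by
        rw [hgr k, ← Real.rpow_mul h2.le]
      have e3 : ((2:ℝ) ^ (e - κ)) ^ k = (2:ℝ) ^ ((e - κ) * k) := by
        rw [← Real.rpow_natCast ((2:ℝ) ^ (e-κ)) k, ← Real.rpow_mul h2.le]
      rw [e1, e2, e3]
      rw [show (2:ℝ) ^ (((k:ℝ)+1)*e) * (C * 2 ^ (-(k:ℝ)*κ))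
            = C * ((2:ℝ) ^ (((k:ℝ)+1)*e) * 2 ^ (-(k:ℝ)*κ)) from by ring,
          ← Real.rpow_add h2,
          show C * (2:ℝ)^e * 2^((e-κ)*(k:ℝ)) = C * ((2:ℝ)^e * 2^((e-κ)*(k:ℝ))) from by ring,
          ← Real.rpow_add h2]
      congr 1
      ring
    calc ∫⁻ x in A k, f x ∂μ
        ≤ ∫⁻ _ in A k, ENNReal.ofReal ((g (k+1))⁻¹) ^ e ∂μ := setLIntegral_mono' hAmeas hfx
      _ = ENNReal.ofReal ((g (k+1))⁻¹) ^ e * μ (A k) := setLIntegral_const _ _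
      _ ≤ ENNReal.ofReal ((g (k+1))⁻¹) ^ e * ENNReal.ofReal (C * g k ^ κ) := by
          gcongr
          refine le_trans (measure_mono ?_) (hbound (g k) (hg_mem k))
          exact fun x hx => hx.2
      _ = D * w ^ k := by
          rw [ENNReal.ofReal_rpow_of_nonneg (by positivity) he, ← ENNReal.ofReal_mul (by positivity),
            hkey, hD, hw, ← ENNReal.ofReal_pow (by positivity),
            ← ENNReal.ofReal_mul (by positivity)]
  have hsum : ∑' k, (D * w ^ k) < ∞ := by
    rw [ENNReal.tsum_mul_left, ENNReal.tsum_geometric]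
    have hw1 : w < 1 := by
      rw [hw, ENNReal.ofReal_lt_one]
      exact Real.rpow_lt_one_of_one_lt_of_neg (by norm_num) (by linarith)
    refine ENNReal.mul_lt_top ENNReal.ofReal_lt_top ?_
    rw [ENNReal.inv_lt_top]
    exact tsub_pos_of_lt hw1
  -- combine
  rw [← lintegral_add_compl f hB]
  refine ENNReal.add_lt_top.mpr ⟨lt_of_le_of_lt hpiece1 hμ, ?_⟩
  have hcompl : {x | (1:ℝ) ≤ h x}ᶜ = {x | h x < 1} := by ext x; simp [not_le]
  have hbd : ∫⁻ x in {x | (1:ℝ) ≤ h x}ᶜ, f x ∂μ ≤ 0 + ∑' k, ∫⁻ x in A k, f x ∂μ := by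
    rw [hcompl]
    refine le_trans (lintegral_mono_set hcover) ?_
    refine le_trans (lintegral_union_le _ _ _) ?_
    gcongr
    · exact le_of_eq (setLIntegral_measure_zero _ _ hZ0)
    · exact lintegral_iUnion_le _ _
  refine lt_of_le_of_lt hbd ?_
  rw [zero_add]
  exact lt_of_le_of_lt (ENNReal.tsum_le_tsum hterm) hsum

lemma geom_le_max (u v l : ℝ) (hu : 0 ≤ u) (hv : 0 ≤ v) (hl0 : 0 ≤ l) (hl1 : l ≤ 1) :
    u ^ l * v ^ (1 - l) ≤ max u v := by
  have hle := Real.geom_mean_le_arith_mean2_weighted (w₁ := l) (w₂ := 1 - l) hl0 (by linarith) hu hv (by ring)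
  refine hle.trans ?_
  have h1 : u ≤ max u v := le_max_left _ _
  have h2 : v ≤ max u v := le_max_right _ _
  nlinarith

lemma dS_lower {n : ℕ} (S : Set (ℝ × En n)) (hSne : S.Nonempty) (t : ℝ) (x : En n) :
    max (Metric.infDist t (Prod.fst '' S)) (Metric.infDist x (Prod.snd '' S)) ≤ dS S t x := by
  haveI := hSne.to_subtype
  refine le_ciInf fun p => ?_
  refine max_le ?_ ?_
  · have h1 : Metric.infDist t (Prod.fst '' S) ≤ dist t (p : ℝ × En n).1 :=
      Metric.infDist_le_dist_of_mem (Set.mem_image_of_mem Prod.fst p.property)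
    refine h1.trans ?_
    rw [Real.dist_eq, ← Real.sqrt_sq_eq_abs]
    exact Real.sqrt_le_sqrt (le_add_of_nonneg_right (sq_nonneg _))
  · have h1 : Metric.infDist x (Prod.snd '' S) ≤ dist x (p : ℝ × En n).2 :=
      Metric.infDist_le_dist_of_mem (Set.mem_image_of_mem Prod.snd p.property)
    refine h1.trans ?_
    refine le_trans (le_of_eq (Real.sqrt_sq dist_nonneg).symm) ?_
    exact Real.sqrt_le_sqrt (le_add_of_nonneg_left (sq_nonneg _))


open MeasureTheory Set Filter ENNReal in
/-- sufficient conditions, in terms of box-counting dimensions of the temporal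
and spatial projections of `S`, for `(α,β)` to belong to the codimension print of `S`. -/
theorem print_projections_inclusion
    {n : ℕ} (hn : 1 ≤ n) (T : ℝ) (hT : 0 < T)
    (S : Set (ℝ × En n)) (hSb : Bornology.IsBounded S) (hSne : S.Nonempty)
    (hSsub : S ⊆ Icc (0:ℝ) T ×ˢ univ)
    (α β : ℝ) (hα : 1 ≤ α) (hβ : 1 ≤ β)
    (s : ℝ) (hs0 : 0 ≤ s) (hs1 : s ≤ 1)
    (a : ℝ) (ha0 : 0 ≤ a) (han : a ≤ n)
    -- dim_B P_t(S) ≤ s and dim_B P_x(S) ≤ a, in uniform Minkowski-sausage form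
    (hPt : ∀ δ > (0:ℝ), ∃ C > (0:ℝ), ∀ ε ∈ Ioc (0:ℝ) 1,
      volume {t : ℝ | Metric.infDist t (Prod.fst '' S) < ε}
        ≤ ENNReal.ofReal (C * ε ^ (1 - s - δ)))
    (hPx : ∀ δ > (0:ℝ), ∃ C > (0:ℝ), ∀ ε ∈ Ioc (0:ℝ) 1,
      volume {x : En n | Metric.infDist x (Prod.snd '' S) < ε}
        ≤ ENNReal.ofReal (C * ε ^ ((n : ℝ) - a - δ)))
    (hcase : α < (n : ℝ) - a ∨ β < 1 - s ∨ α * β < α * (1 - s) + β * ((n : ℝ) - a)) :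
    ∀ K : Set (En n), IsCompact K →
      ∫⁻ t in Ioo (0:ℝ) T,
        (∫⁻ x in K, (dSInv S t x) ^ α) ^ (β / α) < ∞ := by
  intro K hK
  have hα0 : (0:ℝ) < α := lt_of_lt_of_le one_pos hα
  have hβ0 : (0:ℝ) < β := lt_of_lt_of_le one_pos hβ
  have hβα : (0:ℝ) ≤ β / α := div_nonneg hβ0.le hα0.le
  -- choice of interpolation parameter l
  obtain ⟨l, hl0, hl1, hxc, htc⟩ :
      ∃ l : ℝ, 0 ≤ l ∧ l ≤ 1 ∧ ((1 - l) * α = 0 ∨ (1 - l) * α < (n:ℝ) - a) ∧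
        (l * β = 0 ∨ l * β < 1 - s) := by
    by_cases h1 : α < (n:ℝ) - a
    · exact ⟨0, le_refl _, zero_le_one, Or.inr (by simpa using h1), Or.inl (by ring)⟩
    by_cases h2 : β < 1 - s
    · exact ⟨1, zero_le_one, le_refl _, Or.inl (by ring), Or.inr (by simpa using h2)⟩
    have h3 : α * β < α * (1 - s) + β * ((n:ℝ) - a) := by
      rcases hcase with h | h | h
      · exact absurd h h1
      · exact absurd h h2
      · exact h
    push_neg at h1 h2
    set p : ℝ := ((n:ℝ) - a)/α with hpdef
    set q : ℝ := (1 - s)/β with hqdef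
    have hp : p * α = (n:ℝ) - a := div_mul_cancel₀ _ hα0.ne'
    have hq : q * β = 1 - s := div_mul_cancel₀ _ hβ0.ne'
    have hp0 : 0 ≤ p := div_nonneg (by linarith) hα0.le
    have hq0 : 0 ≤ q := div_nonneg (by linarith) hβ0.le
    have hp1 : p ≤ 1 := by rw [hpdef]; exact (div_le_one hα0).mpr h1
    have hq1 : q ≤ 1 := by rw [hqdef]; exact (div_le_one hβ0).mpr h2
    have hpq : 1 - p < q := by nlinarith [mul_pos hα0 hβ0]
    refine ⟨(1 - p + q)/2, by linarith, by linarith, Or.inr ?_, Or.inr ?_⟩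
    · nlinarith
    · nlinarith
  -- notation
  have hr_meas : Measurable fun t : ℝ => Metric.infDist t (Prod.fst '' S) :=
    (Metric.continuous_infDist_pt _).measurable
  have hρ_meas : Measurable fun x : En n => Metric.infDist x (Prod.snd '' S) :=
    (Metric.continuous_infDist_pt _).measurable
  set R : ℝ → ℝ≥0∞ := fun t => (ENNReal.ofReal (Metric.infDist t (Prod.fst '' S)))⁻¹ with hR
  set P : En n → ℝ≥0∞ := fun x => (ENNReal.ofReal (Metric.infDist x (Prod.snd '' S)))⁻¹ with hP
  have hPmeas : Measurable fun x => P x ^ ((1 - l) * α) :=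
    (hρ_meas.ennreal_ofReal.inv).pow measurable_const
  have hRmeas : Measurable fun t => R t ^ (l * β) :=
    (hr_meas.ennreal_ofReal.inv).pow measurable_const
  -- spatial integral finite
  have HI : ∫⁻ x in K, P x ^ ((1 - l) * α) < ∞ := by
    rcases hxc with h0 | hlt
    · rw [h0]
      simp only [ENNReal.rpow_zero, lintegral_one, Measure.restrict_apply_univ]
      exact hK.measure_lt_top
    · have he0 : 0 ≤ (1 - l) * α := mul_nonneg (by linarith) hα0.le
      set δ : ℝ := ((n:ℝ) - a - (1 - l) * α)/2 with hδdef
      have hδ : 0 < δ := by rw [hδdef]; linarith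
      obtain ⟨C, hC, hCb⟩ := hPx δ hδ
      refine aux_finite (volume.restrict K) ?_ _ hρ_meas C ((n:ℝ) - a - δ) hC.le ?_ _ he0 ?_
      · simpa using hK.measure_lt_top
      · intro ε hε
        rw [Measure.restrict_apply (measurableSet_lt hρ_meas measurable_const)]
        exact le_trans (measure_mono inter_subset_left) (hCb ε hε)
      · rw [hδdef]; linarith
  -- temporal integral finite
  have HJ : ∫⁻ t in Ioo (0:ℝ) T, R t ^ (l * β) < ∞ := by
    rcases htc with h0 | hlt
    · rw [h0]
      simp only [ENNReal.rpow_zero, lintegral_one, Measure.restrict_apply_univ]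
      rw [Real.volume_Ioo]
      exact ENNReal.ofReal_lt_top
    · have he0 : 0 ≤ l * β := mul_nonneg hl0 hβ0.le
      set δ : ℝ := (1 - s - l * β)/2 with hδdef
      have hδ : 0 < δ := by rw [hδdef]; linarith
      obtain ⟨C, hC, hCb⟩ := hPt δ hδ
      refine aux_finite (volume.restrict (Ioo (0:ℝ) T)) ?_ _ hr_meas C (1 - s - δ) hC.le ?_ _ he0 ?_
      · rw [Measure.restrict_apply_univ, Real.volume_Ioo]
        exact ENNReal.ofReal_lt_top
      · intro ε hε
        rw [Measure.restrict_apply (measurableSet_lt hr_meas measurable_const)]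
        exact le_trans (measure_mono inter_subset_left) (hCb ε hε)
      · rw [hδdef]; linarith
  set I : ℝ≥0∞ := ∫⁻ x in K, P x ^ ((1 - l) * α) with hI
  -- pointwise bound
  have hpt : ∀ (t : ℝ) (x : En n), dSInv S t x ^ α ≤ R t ^ (l * α) * P x ^ ((1 - l) * α) := by
    intro t x
    have hmax := dS_lower S hSne t x
    have hgeo : Metric.infDist t (Prod.fst '' S) ^ l
        * Metric.infDist x (Prod.snd '' S) ^ (1 - l) ≤ dS S t x :=
      le_trans (geom_le_max _ _ _ Metric.infDist_nonneg Metric.infDist_nonneg hl0 hl1) hmax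
    have h1 : dSInv S t x ≤ R t ^ l * P x ^ (1 - l) := by
      calc dSInv S t x = (ENNReal.ofReal (dS S t x))⁻¹ := rfl
        _ ≤ (ENNReal.ofReal (Metric.infDist t (Prod.fst '' S) ^ l
              * Metric.infDist x (Prod.snd '' S) ^ (1 - l)))⁻¹ :=
            ENNReal.inv_le_inv.mpr (ENNReal.ofReal_le_ofReal hgeo)
        _ = R t ^ l * P x ^ (1 - l) := by
            rw [ENNReal.ofReal_mul (Real.rpow_nonneg Metric.infDist_nonneg _),
              ← ENNReal.ofReal_rpow_of_nonneg Metric.infDist_nonneg hl0,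
              ← ENNReal.ofReal_rpow_of_nonneg Metric.infDist_nonneg (by linarith : (0:ℝ) ≤ 1 - l),
              ENNReal.mul_inv
                (Or.inr (ENNReal.rpow_ne_top_of_nonneg (by linarith) ENNReal.ofReal_ne_top))
                (Or.inl (ENNReal.rpow_ne_top_of_nonneg hl0 ENNReal.ofReal_ne_top)),
              ← ENNReal.inv_rpow, ← ENNReal.inv_rpow]
    calc dSInv S t x ^ α ≤ (R t ^ l * P x ^ (1 - l)) ^ α := ENNReal.rpow_le_rpow h1 hα0.le
      _ = R t ^ (l * α) * P x ^ ((1 - l) * α) := by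
          rw [ENNReal.mul_rpow_of_nonneg _ _ hα0.le, ← ENNReal.rpow_mul, ← ENNReal.rpow_mul]
  -- main chain
  calc ∫⁻ t in Ioo (0:ℝ) T, (∫⁻ x in K, dSInv S t x ^ α) ^ (β / α)
      ≤ ∫⁻ t in Ioo (0:ℝ) T, I ^ (β / α) * R t ^ (l * β) := by
        refine lintegral_mono fun t => ?_
        have hinner : ∫⁻ x in K, dSInv S t x ^ α ≤ R t ^ (l * α) * I := by
          calc ∫⁻ x in K, dSInv S t x ^ α
              ≤ ∫⁻ x in K, R t ^ (l * α) * P x ^ ((1 - l) * α) :=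
                lintegral_mono fun x => hpt t x
            _ = R t ^ (l * α) * I := lintegral_const_mul _ hPmeas
        calc (∫⁻ x in K, dSInv S t x ^ α) ^ (β / α)
            ≤ (R t ^ (l * α) * I) ^ (β / α) := ENNReal.rpow_le_rpow hinner hβα
          _ = I ^ (β / α) * R t ^ (l * β) := by
              rw [ENNReal.mul_rpow_of_nonneg _ _ hβα, ← ENNReal.rpow_mul,
                show l * α * (β / α) = l * β from by field_simp]
              ring
    _ = I ^ (β / α) * ∫⁻ t in Ioo (0:ℝ) T, R t ^ (l * β) := lintegral_const_mul _ hRmeas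
    _ < ∞ := ENNReal.mul_lt_top (ENNReal.rpow_lt_top_of_nonneg hβα HI.ne) HJ
end
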